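/- arXiv:2403.12330 — 6 statements merged into one kernel-verified Lean document; each statement's English description precedes it below -/
import Mathlib

section
/- If every Pauli string appearing in the expansion of a traceless Hamiltonian H = Σ_X Σ_μ J_X^μ ⊗_{j∈X} σ_j^{μ_j} has support X with diameter D(X) < N/4, then the expectation value ⟨EAP| H |EAP⟩ = 0 for any entangled antipodal pair state |EAP⟩. -/
open Matrix Finset
open scoped Kronecker

noncomputable section

/-- Pauli X. -/
def σx : Matrix (Fin 2) (Fin 2) ℂ := !![0, 1; 1, 0]
/-- Pauli Y. -/
def σy : Matrix (Fin 2) (Fin 2) ℂ := !![0, -Complex.I; Complex.I, 0]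
/-- Pauli Z. -/
def σz : Matrix (Fin 2) (Fin 2) ℂ := !![1, 0; 0, -1]

/-- Pauli matrices indexed by `0 = x`, `1 = y`, `2 = z`. -/
def pauli : Fin 3 → Matrix (Fin 2) (Fin 2) ℂ := ![σx, σy, σz]

/-- The Bell state `|Φ_{pq}⟩ = (|0⟩|p⟩ + (-1)^q |1⟩|p̄⟩)/√2` on two qubits. -/
def bell (p q : Fin 2) : Fin 2 × Fin 2 → ℂ := fun ab =>
  ((if ab = (0, p) then 1 else 0) +
    (if ab = (1, p + 1) then ((-1 : ℂ)) ^ (q : ℕ) else 0)) / (Real.sqrt 2 : ℂ)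

/-- Signs `ω^x = (-1)^q`, `ω^y = -ω^x ω^z`, `ω^z = (-1)^p`, indexed by `0 = x`, `1 = y`, `2 = z`. -/
def omegaSign (p q : Fin 2) : Fin 3 → ℂ :=
  ![((-1 : ℂ)) ^ (q : ℕ), -(((-1 : ℂ)) ^ (q : ℕ) * ((-1 : ℂ)) ^ (p : ℕ)),
    ((-1 : ℂ)) ^ (p : ℕ)]

/-- Spin configurations of the cyclic chain `Λ = ℤ/N`. -/
abbrev Cfg (N : ℕ) := ZMod N → Fin 2

/-- The single-site operator `σ_j^A` (acting as `A` on site `j` and identity elsewhere). -/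
def pauliAt (N : ℕ) [NeZero N] (j : ZMod N) (A : Matrix (Fin 2) (Fin 2) ℂ) :
    Matrix (Cfg N) (Cfg N) ℂ :=
  Matrix.of fun c c' => if ∀ i, i ≠ j → c i = c' i then A (c j) (c' j) else 0

/-- The Pauli string `⊗_{j∈X} σ_j^{μ_j}`. -/
def pauliString (N : ℕ) [NeZero N] (X : Finset (ZMod N)) (μ : ZMod N → Fin 3) :
    Matrix (Cfg N) (Cfg N) ℂ :=
  Matrix.of fun c c' =>
    (∏ j ∈ X, pauli (μ j) (c j) (c' j)) * (if ∀ i, i ∉ X → c i = c' i then 1 else 0)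

/-- The entangled antipodal pair state `⊗_{j=0}^{M-1} |Φ_{p_j q_j}⟩_{j, j+M}` on a chain
of length `N = 2M`, as an amplitude function on configurations. -/
def eapState (N M : ℕ) [NeZero N] (p q : ZMod N → Fin 2) : Cfg N → ℂ :=
  fun c => ∏ j ∈ Finset.range M,
    bell (p (j : ZMod N)) (q (j : ZMod N)) (c (j : ZMod N), c ((j : ZMod N) + (M : ZMod N)))

/-- Diameter of a subset of the cycle `ℤ/N` (maximal cyclic distance between two points). -/
def diam (N : ℕ) [NeZero N] (X : Finset (ZMod N)) : ℕ :=
  X.sup fun a => X.sup fun b => min (a - b).val (b - a).val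

/-- A Hamiltonian expanded in the Pauli string basis,
`H = Σ_X Σ_μ J_X^μ ⊗_{j∈X} σ_j^{μ_j}`, with real coefficients `J`. -/
def ham (N : ℕ) [NeZero N] (J : Finset (ZMod N) → (ZMod N → Fin 3) → ℝ) :
    Matrix (Cfg N) (Cfg N) ℂ :=
  ∑ X : Finset (ZMod N), ∑ μ : ZMod N → Fin 3, (J X μ : ℂ) • pauliString N X μ

/-!
Both the EAP state and a Pauli string factor over the antipodal pairs `{j, j + M}`, so the
expectation of a Pauli string is a product of two-site expectations `⟨Φ| A ⊗ B |Φ⟩`. A support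
of diameter `< M` never contains both points of an antipodal pair, so some nonempty support
puts `σ ⊗ 1` or `1 ⊗ σ` on a pair; the one-site marginal of a Bell state is maximally mixed,
so that factor is `tr σ / 2 = 0`.
-/

section ProductState

variable {R α ι κ : Type*} [CommSemiring R] [StarRing R] [Fintype α] [Fintype ι] [Fintype κ]

theorem star_dotProduct_mulVec_eq_sum (v : α → R) (H : Matrix α α R) :
    star v ⬝ᵥ H *ᵥ v = ∑ c, ∑ c', star (v c) * H c c' * v c' := by
  simp only [dotProduct, mulVec, Pi.star_apply, Finset.mul_sum, mul_assoc]

theorem star_dotProduct_mulVec_of_prod [DecidableEq ι] (e : α ≃ (ι → κ)) (ψ : ι → κ → R)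
    (A : ι → Matrix κ κ R) {v : α → R} {H : Matrix α α R}
    (hv : ∀ c, v c = ∏ j, ψ j (e c j)) (hH : ∀ c c', H c c' = ∏ j, A j (e c j) (e c' j)) :
    star v ⬝ᵥ H *ᵥ v = ∏ j, star (ψ j) ⬝ᵥ A j *ᵥ ψ j := by
  calc star v ⬝ᵥ H *ᵥ v
      = ∑ c, ∑ c', ∏ j, star (ψ j (e c j)) * A j (e c j) (e c' j) * ψ j (e c' j) := by
        simp only [star_dotProduct_mulVec_eq_sum, hv, hH, star_prod, Finset.prod_mul_distrib]
    _ = ∑ x : ι → κ, ∑ y : ι → κ, ∏ j, star (ψ j (x j)) * A j (x j) (y j) * ψ j (y j) := by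
        rw [← e.symm.sum_comp]
        refine Fintype.sum_congr _ _ fun x => ?_
        rw [← e.symm.sum_comp]
        simp only [Equiv.apply_symm_apply]
    _ = ∏ j, star (ψ j) ⬝ᵥ A j *ᵥ ψ j := by
        simp only [star_dotProduct_mulVec_eq_sum, Fintype.prod_sum]

end ProductState

section Bell

theorem inv_sqrt_two_mul_inv_sqrt_two : (Real.sqrt 2 : ℂ)⁻¹ * (Real.sqrt 2 : ℂ)⁻¹ = 1 / 2 := by
  rw [← mul_inv, ← Complex.ofReal_mul, Real.mul_self_sqrt zero_le_two]
  norm_num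

theorem star_bell_dotProduct_kronecker_one_mulVec (P Q : Fin 2) (A : Matrix (Fin 2) (Fin 2) ℂ) :
    star (bell P Q) ⬝ᵥ (A ⊗ₖ 1) *ᵥ bell P Q = A.trace / 2 := by
  fin_cases P <;> fin_cases Q <;>
    simp [dotProduct, mulVec, Fintype.sum_prod_type, Fin.sum_univ_two, bell, Matrix.trace,
      Matrix.one_apply, Prod.ext_iff] <;>
    linear_combination (A 0 0 + A 1 1) * inv_sqrt_two_mul_inv_sqrt_two

theorem star_bell_dotProduct_one_kronecker_mulVec (P Q : Fin 2) (A : Matrix (Fin 2) (Fin 2) ℂ) :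
    star (bell P Q) ⬝ᵥ (1 ⊗ₖ A) *ᵥ bell P Q = A.trace / 2 := by
  fin_cases P <;> fin_cases Q <;>
    simp [dotProduct, mulVec, Fintype.sum_prod_type, Fin.sum_univ_two, bell, Matrix.trace,
      Matrix.one_apply, Prod.ext_iff] <;>
    linear_combination (A 0 0 + A 1 1) * inv_sqrt_two_mul_inv_sqrt_two

theorem trace_pauli (ν : Fin 3) : (pauli ν).trace = 0 := by
  fin_cases ν <;> simp [pauli, σx, σy, σz, Matrix.trace]

end Bell

section Pairs

variable {α ι κ R : Type*}

def pairCfgEquiv (e : ι × Fin 2 ≃ α) (κ : Type*) : (α → κ) ≃ (ι → κ × κ) :=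
  (e.arrowCongr (Equiv.refl κ)).symm.trans <|
    (Equiv.curry ι (Fin 2) κ).trans <| Equiv.piCongrRight fun _ => finTwoArrowEquiv κ

@[simp]
theorem pairCfgEquiv_apply (e : ι × Fin 2 ≃ α) (c : α → κ) (j : ι) :
    pairCfgEquiv e κ c j = (c (e (j, 0)), c (e (j, 1))) :=
  rfl

theorem prod_eq_prod_pairs [Fintype α] [Fintype ι] [CommMonoid R] (e : ι × Fin 2 ≃ α)
    (f : α → R) : ∏ a, f a = ∏ j, f (e (j, 0)) * f (e (j, 1)) := by
  rw [← e.prod_comp, Fintype.prod_prod_type]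
  simp only [Fin.prod_univ_two]

end Pairs

section AntipodalPairs

variable {N M : ℕ} [NeZero N]

def antipodalPairEquiv (hN : N = 2 * M) : Fin M × Fin 2 ≃ ZMod N :=
  (Equiv.prodComm _ _).trans <| finProdFinEquiv.trans <| (finCongr hN.symm).trans
    (ZMod.finEquiv N).toEquiv

open Fin.CommRing in
theorem antipodalPairEquiv_apply (hN : N = 2 * M) (j : Fin M) (s : Fin 2) :
    antipodalPairEquiv hN (j, s) = (j : ZMod N) + (s : ℕ) * (M : ZMod N) := by
  simp only [antipodalPairEquiv, Equiv.trans_apply, Equiv.prodComm_apply, Prod.swap_prod_mk,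
    finCongr_apply, RingEquiv.toEquiv_eq_coe, RingEquiv.coe_toEquiv]
  rw [← Fin.cast_val_eq_self (Fin.cast _ _), map_natCast (ZMod.finEquiv N)]
  simp only [Fin.val_cast, finProdFinEquiv_apply_val]
  push_cast
  ring

@[simp]
theorem antipodalPairEquiv_apply_zero (hN : N = 2 * M) (j : Fin M) :
    antipodalPairEquiv hN (j, 0) = (j : ZMod N) := by
  simp [antipodalPairEquiv_apply]

@[simp]
theorem antipodalPairEquiv_apply_one (hN : N = 2 * M) (j : Fin M) :
    antipodalPairEquiv hN (j, 1) = (j : ZMod N) + (M : ZMod N) := by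
  simp [antipodalPairEquiv_apply]

end AntipodalPairs

section PauliString

variable {N M : ℕ} [NeZero N]

def pauliFactor {α : Type*} [DecidableEq α] (X : Finset α) (μ : α → Fin 3) (i : α) :
    Matrix (Fin 2) (Fin 2) ℂ :=
  if i ∈ X then pauli (μ i) else 1

theorem pauliString_apply_eq_prod (X : Finset (ZMod N)) (μ : ZMod N → Fin 3) (c c' : Cfg N) :
    pauliString N X μ c c' = ∏ i, pauliFactor X μ i (c i) (c' i) := by
  rw [← Finset.prod_mul_prod_compl X]
  have h_in : ∏ i ∈ X, pauliFactor X μ i (c i) (c' i) = ∏ i ∈ X, pauli (μ i) (c i) (c' i) :=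
    Finset.prod_congr rfl fun i hi => by rw [pauliFactor, if_pos hi]
  have h_out : ∏ i ∈ Xᶜ, pauliFactor X μ i (c i) (c' i)
      = if ∀ i, i ∉ X → c i = c' i then 1 else 0 := by
    rw [Finset.prod_congr rfl fun i hi => by
      rw [pauliFactor, if_neg (Finset.mem_compl.mp hi), one_apply], Finset.prod_boole]
    simp only [Finset.mem_compl]
  rw [h_in, h_out]
  rfl

theorem pauliString_apply_eq_prod_pairs {ι : Type*} [Fintype ι] (e : ι × Fin 2 ≃ ZMod N)
    (X : Finset (ZMod N)) (μ : ZMod N → Fin 3) (c c' : Cfg N) :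
    pauliString N X μ c c' = ∏ j, (pauliFactor X μ (e (j, 0)) ⊗ₖ pauliFactor X μ (e (j, 1)))
      (pairCfgEquiv e _ c j) (pairCfgEquiv e _ c' j) := by
  simp only [pauliString_apply_eq_prod, prod_eq_prod_pairs e, pairCfgEquiv_apply,
    kroneckerMap_apply]

theorem eapState_eq_prod (hN : N = 2 * M) (p q : ZMod N → Fin 2) (c : Cfg N) :
    eapState N M p q c
      = ∏ j : Fin M, bell (p j) (q j) (pairCfgEquiv (antipodalPairEquiv hN) _ c j) := by
  simp only [pairCfgEquiv_apply, antipodalPairEquiv_apply_zero, antipodalPairEquiv_apply_one]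
  exact (Fin.prod_univ_eq_prod_range (fun j : ℕ => bell (p j) (q j) (c j, c (j + M))) M).symm

theorem star_eapState_dotProduct_pauliString_mulVec (hN : N = 2 * M) (p q : ZMod N → Fin 2)
    (X : Finset (ZMod N)) (μ : ZMod N → Fin 3) :
    star (eapState N M p q) ⬝ᵥ pauliString N X μ *ᵥ eapState N M p q
      = ∏ j : Fin M, star (bell (p j) (q j)) ⬝ᵥ
          (pauliFactor X μ (j : ZMod N) ⊗ₖ pauliFactor X μ ((j : ZMod N) + M)) *ᵥ
            bell (p j) (q j) := by
  refine star_dotProduct_mulVec_of_prod (pairCfgEquiv (antipodalPairEquiv hN) _) _ _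
    (eapState_eq_prod hN p q) fun c c' => ?_
  rw [pauliString_apply_eq_prod_pairs (antipodalPairEquiv hN)]
  simp only [antipodalPairEquiv_apply_zero, antipodalPairEquiv_apply_one]

end PauliString

section Diameter

variable {N M : ℕ} [NeZero N]

theorem min_val_sub_le_diam {X : Finset (ZMod N)} {a b : ZMod N} (ha : a ∈ X) (hb : b ∈ X) :
    min (a - b).val (b - a).val ≤ diam N X :=
  (Finset.le_sup (f := fun b => min (a - b).val (b - a).val) hb).trans
    (Finset.le_sup (f := fun a => X.sup fun b => min (a - b).val (b - a).val) ha)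

theorem add_half_notMem_of_diam_lt (hN : N = 2 * M) {X : Finset (ZMod N)} (hX : diam N X < M)
    {i : ZMod N} (hi : i ∈ X) : i + (M : ZMod N) ∉ X := by
  intro hi'
  have hM_pos : 0 < M := by have := NeZero.ne N; omega
  have hM_val : (M : ZMod N).val = M := ZMod.val_cast_of_lt (by omega)
  have hM_ne : (M : ZMod N) ≠ 0 := by
    intro h
    rw [h, ZMod.val_zero] at hM_val
    omega
  have h_fwd : (i + M - i).val = M := by rw [add_sub_cancel_left, hM_val]
  have h_bwd : (i - (i + M)).val = M := by
    rw [sub_add_cancel_left, ZMod.neg_val, if_neg hM_ne, hM_val]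
    omega
  have := min_val_sub_le_diam hi hi'
  rw [h_fwd, h_bwd, min_self] at this
  omega

end Diameter

section Vanishing

variable {N M : ℕ} [NeZero N]

theorem star_eapState_dotProduct_pauliString_mulVec_eq_zero (hN : N = 2 * M)
    (p q : ZMod N → Fin 2) {X : Finset (ZMod N)} (μ : ZMod N → Fin 3) (hX : X.Nonempty)
    (hX_antipode : ∀ i ∈ X, i + (M : ZMod N) ∉ X) :
    star (eapState N M p q) ⬝ᵥ pauliString N X μ *ᵥ eapState N M p q = 0 := by
  rw [star_eapState_dotProduct_pauliString_mulVec hN]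
  obtain ⟨i, hi⟩ := hX
  obtain ⟨⟨j, s⟩, rfl⟩ := (antipodalPairEquiv hN).surjective i
  refine Finset.prod_eq_zero (Finset.mem_univ j) ?_
  fin_cases s
  · replace hi : (j : ZMod N) ∈ X := by simpa using hi
    rw [pauliFactor, if_pos hi, pauliFactor, if_neg (hX_antipode _ hi),
      star_bell_dotProduct_kronecker_one_mulVec, trace_pauli, zero_div]
  · replace hi : (j : ZMod N) + M ∈ X := by simpa using hi
    have hj : (j : ZMod N) ∉ X := fun hj => hX_antipode _ hj hi
    rw [pauliFactor, if_neg hj, pauliFactor, if_pos hi,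
      star_bell_dotProduct_one_kronecker_mulVec, trace_pauli, zero_div]

end Vanishing

theorem star_dotProduct_ham_mulVec {N : ℕ} [NeZero N]
    (J : Finset (ZMod N) → (ZMod N → Fin 3) → ℝ) (v : Cfg N → ℂ) :
    star v ⬝ᵥ ham N J *ᵥ v = ∑ X, ∑ μ, (J X μ : ℂ) * (star v ⬝ᵥ pauliString N X μ *ᵥ v) := by
  simp only [ham, Matrix.sum_mulVec, dotProduct_sum, Matrix.smul_mulVec, dotProduct_smul,
    smul_eq_mul]

theorem eap_ham_expectation_zero_general (N M : ℕ) [NeZero N] (hN : N = 2 * M)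
    (p q : ZMod N → Fin 2)
    (J : Finset (ZMod N) → (ZMod N → Fin 3) → ℝ)
    (hJ : ∀ X μ, J X μ ≠ 0 → X.Nonempty ∧ 4 * diam N X < N) :
    dotProduct (star (eapState N M p q)) ((ham N J).mulVec (eapState N M p q)) = 0 := by
  rw [star_dotProduct_ham_mulVec]
  refine Finset.sum_eq_zero fun X _ => Finset.sum_eq_zero fun μ _ => ?_
  by_cases hJ0 : J X μ = 0
  · simp [hJ0]
  obtain ⟨hX, h_diam⟩ := hJ X μ hJ0
  have hX_antipode : ∀ i ∈ X, i + (M : ZMod N) ∉ X :=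
    fun _ => add_half_notMem_of_diam_lt hN (by omega)
  rw [star_eapState_dotProduct_pauliString_mulVec_eq_zero hN p q μ hX hX_antipode, mul_zero]

/-- If every Pauli string appearing in a traceless Hamiltonian has support of diameter
`< N/4`, then `⟨EAP|H|EAP⟩ = 0` for every EAP state. -/
theorem eap_ham_expectation_zero (N M : ℕ) [NeZero N] (hN : N = 2 * M)
    (p q : ZMod N → Fin 2)
    (hp : ∀ j : ZMod N, p (j + (M : ZMod N)) = p j)
    (hq : ∀ j : ZMod N, q (j + (M : ZMod N)) = q j)
    (J : Finset (ZMod N) → (ZMod N → Fin 3) → ℝ)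
    (hJ : ∀ X μ, J X μ ≠ 0 → X.Nonempty ∧ 4 * diam N X < N) :
    dotProduct (star (eapState N M p q)) ((ham N J).mulVec (eapState N M p q)) = 0 :=
  eap_ham_expectation_zero_general N M hN p q J hJ
end
end

section
/- Let H = Σ_X Σ_μ J_X^μ ⊗_{j∈X} σ_j^{μ_j} with J_X^μ = 0 for D(X) ≥ N/4. Then |EAP⟩ is an eigenvector of H if and only if for all subsets X and all μ ∈ {x,y,z}^X, J_{X+N/2}^{ν} = -J_X^{μ} ∏_{j∈X} ω_j^{μ_j}, where ν_k = μ_{k-N/2} for k ∈ X+N/2. -/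
open Matrix Finset
open scoped Kronecker

noncomputable section

set_option linter.unusedSectionVars false
namespace EAP

def pairK (A B : Matrix (Fin 2) (Fin 2) ℂ) : Matrix (Fin 2 × Fin 2) (Fin 2 × Fin 2) ℂ :=
  Matrix.of fun t s => A t.1 s.1 * B t.2 s.2

def pairB (u w : Fin 2 × Fin 2 → ℂ) : ℂ := ∑ t, u t * w t

def eps : Fin 3 → ℂ := ![1, -1, 1]

lemma pairB_comm (u w) : pairB u w = pairB w u := by
  unfold pairB; exact Finset.sum_congr rfl fun t _ => mul_comm _ _

lemma pairB_smul_left (c : ℂ) (u w) : pairB (c • u) w = c * pairB u w := by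
  unfold pairB; rw [Finset.mul_sum]; exact Finset.sum_congr rfl fun t _ => by simp [mul_assoc]

lemma pairB_smul_right (c : ℂ) (u w) : pairB u (c • w) = c * pairB u w := by
  rw [pairB_comm, pairB_smul_left, pairB_comm]

lemma pairK_one_one : pairK 1 1 = (1 : Matrix (Fin 2 × Fin 2) (Fin 2 × Fin 2) ℂ) := by
  ext ⟨a,b⟩ ⟨c,d⟩
  simp [pairK, Matrix.one_apply, Prod.ext_iff]
  by_cases h1 : a = c <;> by_cases h2 : b = d <;> simp [h1, h2]

lemma pairK_one_mulVec (u : Fin 2 × Fin 2 → ℂ) : (pairK 1 1).mulVec u = u := by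
  rw [pairK_one_one, Matrix.one_mulVec]

-- flip lemma
lemma flip_pair (p q : Fin 2) (m : Fin 3) :
    (pairK 1 (pauli m)).mulVec (bell p q)
      = omegaSign p q m • (pairK (pauli m) 1).mulVec (bell p q) := by
  funext t
  obtain ⟨t1, t2⟩ := t
  simp only [Matrix.mulVec, dotProduct, Fintype.sum_prod_type, Fin.sum_univ_two, pairK,
    Matrix.of_apply, Matrix.one_apply, Pi.smul_apply, smul_eq_mul, bell, omegaSign, pauli]
  fin_cases p <;> fin_cases q <;> fin_cases m <;> fin_cases t1 <;> fin_cases t2 <;>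
    norm_num [σx, σy, σz, Prod.ext_iff, show (1+1:Fin 2) = 0 from rfl,
      show (0+1:Fin 2) = 1 from rfl] <;> ring_nf

def bellN (p q : Fin 2) : Fin 2 × Fin 2 → ℂ := fun ab =>
  (if ab = (0, p) then 1 else 0) + (if ab = (1, p + 1) then ((-1 : ℂ)) ^ (q : ℕ) else 0)

lemma bell_eq_smul (p q : Fin 2) : bell p q = ((Real.sqrt 2 : ℂ))⁻¹ • bellN p q := by
  funext t; simp [bell, bellN, div_eq_mul_inv, mul_comm]

lemma sqrt2_inv_sq : ((Real.sqrt 2 : ℂ))⁻¹ * ((Real.sqrt 2 : ℂ))⁻¹ = 2⁻¹ := by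
  rw [← mul_inv, ← Complex.ofReal_mul, Real.mul_self_sqrt (by norm_num)]; norm_num

lemma pairB_KK (p q : Fin 2) (C D : Matrix (Fin 2) (Fin 2) ℂ) :
    pairB ((pairK C 1).mulVec (bell p q)) ((pairK D 1).mulVec (bell p q))
      = (C 0 0 * D 0 0 + C 0 1 * D 0 1 + C 1 0 * D 1 0 + C 1 1 * D 1 1) / 2 := by
  rw [bell_eq_smul, Matrix.mulVec_smul, Matrix.mulVec_smul, pairB_smul_left, pairB_smul_right,
    ← mul_assoc, sqrt2_inv_sq]
  have hN : pairB ((pairK C 1).mulVec (bellN p q)) ((pairK D 1).mulVec (bellN p q))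
      = C 0 0 * D 0 0 + C 0 1 * D 0 1 + C 1 0 * D 1 0 + C 1 1 * D 1 1 := by
    simp only [pairB, Matrix.mulVec, dotProduct, Fintype.sum_prod_type, Fin.sum_univ_two,
      pairK, Matrix.of_apply, Matrix.one_apply, bellN]
    fin_cases p <;> fin_cases q <;>
      norm_num [Prod.ext_iff, show (1+1:Fin 2) = 0 from rfl, show (0+1:Fin 2) = 1 from rfl] <;>
      ring
  rw [hN]; ring

lemma gram_pauli (p q : Fin 2) (a b : Fin 3) :
    pairB ((pairK (pauli a) 1).mulVec (bell p q)) ((pairK (pauli b) 1).mulVec (bell p q))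
      = if a = b then eps a else 0 := by
  rw [pairB_KK]
  fin_cases a <;> fin_cases b <;>
    norm_num [pauli, σx, σy, σz, eps, Complex.I_mul_I] <;>
    simp [Fin.ext_iff]

lemma gram_bell_pauli (p q : Fin 2) (b : Fin 3) :
    pairB (bell p q) ((pairK (pauli b) 1).mulVec (bell p q)) = 0 := by
  have h := pairB_KK p q 1 (pauli b)
  rw [pairK_one_mulVec] at h
  rw [h]
  fin_cases b <;> norm_num [pauli, σx, σy, σz, Matrix.one_apply]

lemma gram_bell (p q : Fin 2) : pairB (bell p q) (bell p q) = 1 := by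
  have h := pairB_KK p q 1 1
  rw [pairK_one_mulVec] at h
  rw [h]; norm_num [Matrix.one_apply]

lemma omega_mul_self (p q : Fin 2) (m : Fin 3) :
    omegaSign p q m * omegaSign p q m = 1 := by
  fin_cases p <;> fin_cases q <;> fin_cases m <;> norm_num [omegaSign]

lemma eps_ne_zero (a : Fin 3) : eps a ≠ 0 := by
  fin_cases a <;> norm_num [eps]

section Chain
variable (N M : ℕ) [NeZero N]

def pairEmb (i : Fin M) (k : Fin 2) : ZMod N := (((i : ℕ) + (k : ℕ) * M : ℕ) : ZMod N)

lemma val_pairEmb (hN : N = 2*M) (i : Fin M) (k : Fin 2) :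
    (pairEmb N M i k).val = (i : ℕ) + (k : ℕ) * M := by
  have hi := i.2
  have hk : (k : ℕ) ≤ 1 := Nat.lt_succ_iff.mp k.2
  have hkM : (k : ℕ) * M ≤ M := by
    calc (k:ℕ) * M ≤ 1 * M := Nat.mul_le_mul_right M hk
    _ = M := one_mul M
  exact ZMod.val_cast_of_lt (by omega)

def pairEquiv (hN : N = 2*M) : Fin M × Fin 2 ≃ ZMod N :=
  Equiv.ofBijective (fun ik => pairEmb N M ik.1 ik.2) (by
    rw [Fintype.bijective_iff_injective_and_card]
    constructor
    · rintro ⟨i, k⟩ ⟨i', k'⟩ h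
      have h2 := congrArg ZMod.val h
      simp only [val_pairEmb N M hN] at h2
      have hi := i.2; have hi' := i'.2
      have : (i : ℕ) = (i' : ℕ) ∧ (k : ℕ) = (k' : ℕ) := by
        fin_cases k <;> fin_cases k' <;> simp at h2 ⊢ <;> omega
      exact Prod.ext (Fin.ext this.1) (Fin.ext this.2)
    · simp only [Fintype.card_prod, Fintype.card_fin, ZMod.card]
      omega)

lemma pairEquiv_zero (hN : N = 2*M) (i : Fin M) :
    pairEquiv N M hN (i, 0) = ((i : ℕ) : ZMod N) := by
  simp [pairEquiv, pairEmb]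

lemma pairEquiv_one (hN : N = 2*M) (i : Fin M) :
    pairEquiv N M hN (i, 1) = ((i : ℕ) : ZMod N) + (M : ZMod N) := by
  simp only [pairEquiv, Equiv.ofBijective_apply, pairEmb, Fin.val_one]
  push_cast
  ring

lemma prod_pairs (hN : N = 2*M) (g : ZMod N → ℂ) :
    ∏ j : ZMod N, g j
      = ∏ i : Fin M, (g ((i : ℕ) : ZMod N) * g (((i : ℕ) : ZMod N) + (M : ZMod N))) := by
  rw [← (pairEquiv N M hN).prod_comp g, Fintype.prod_prod_type]
  refine Finset.prod_congr rfl fun i _ => ?_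
  rw [Fin.prod_univ_two, pairEquiv_zero, pairEquiv_one]

end Chain

section Chain2
variable (N M : ℕ) [NeZero N]

def cfgEquiv (hN : N = 2*M) : Cfg N ≃ (Fin M → Fin 2 × Fin 2) :=
  (((pairEquiv N M hN).arrowCongr (Equiv.refl (Fin 2))).symm.trans
    (Equiv.curry _ _ _)).trans
    (Equiv.piCongrRight fun _ => finTwoArrowEquiv (Fin 2))

lemma cfgEquiv_apply (hN : N = 2*M) (c : Cfg N) (i : Fin M) :
    cfgEquiv N M hN c i = (c ((i : ℕ) : ZMod N), c (((i : ℕ) : ZMod N) + (M : ZMod N))) := by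
  simp only [cfgEquiv, Equiv.trans_apply, Equiv.piCongrRight_apply, Equiv.arrowCongr_symm,
    Equiv.arrowCongr_apply, Equiv.curry_apply, finTwoArrowEquiv_apply, Equiv.refl_symm,
    Equiv.coe_refl, Function.comp_apply, Function.curry_apply, Pi.map_apply]
  rw [← pairEquiv_one N M hN i, ← pairEquiv_zero N M hN i]
  rfl

lemma sum_cfg (hN : N = 2*M) (f : Fin M → Fin 2 × Fin 2 → ℂ) :
    ∑ c : Cfg N, ∏ i : Fin M, f i (c ((i : ℕ) : ZMod N), c (((i : ℕ) : ZMod N) + (M : ZMod N)))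
      = ∏ i : Fin M, ∑ t : Fin 2 × Fin 2, f i t := by
  rw [Finset.prod_univ_sum, Fintype.piFinset_univ]
  exact Fintype.sum_equiv (cfgEquiv N M hN) _ _
    (fun c => Finset.prod_congr rfl fun i _ => by rw [cfgEquiv_apply])
end Chain2

section Chain3
variable (N M : ℕ) [NeZero N]

def siteOp (X : Finset (ZMod N)) (μ : ZMod N → Fin 3) (j : ZMod N) :
    Matrix (Fin 2) (Fin 2) ℂ :=
  if j ∈ X then pauli (μ j) else 1

lemma pauliString_apply (X : Finset (ZMod N)) (μ : ZMod N → Fin 3) (c c' : Cfg N) :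
    pauliString N X μ c c' = ∏ j : ZMod N, siteOp N X μ j (c j) (c' j) := by
  rw [pauliString, Matrix.of_apply, ← Finset.prod_mul_prod_compl X
    (fun j => siteOp N X μ j (c j) (c' j))]
  congr 1
  · exact Finset.prod_congr rfl fun j hj => by rw [siteOp, if_pos hj]
  · have h1 : ∏ i ∈ Xᶜ, siteOp N X μ i (c i) (c' i)
        = ∏ i ∈ Xᶜ, (if c i = c' i then (1:ℂ) else 0) :=
      Finset.prod_congr rfl fun j hj => by
        rw [siteOp, if_neg (Finset.mem_compl.mp hj), Matrix.one_apply]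
    rw [h1, Finset.prod_boole]
    simp only [Finset.mem_compl]
end Chain3

section Chain4
variable (N M : ℕ) [NeZero N]

def pairOp (X : Finset (ZMod N)) (μ : ZMod N → Fin 3) (i : Fin M) :
    Matrix (Fin 2 × Fin 2) (Fin 2 × Fin 2) ℂ :=
  pairK (siteOp N X μ ((i : ℕ) : ZMod N)) (siteOp N X μ (((i : ℕ) : ZMod N) + (M : ZMod N)))

def pairVec (X : Finset (ZMod N)) (μ : ZMod N → Fin 3) (p q : ZMod N → Fin 2) (i : Fin M) :
    Fin 2 × Fin 2 → ℂ :=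
  (pairOp N M X μ i).mulVec (bell (p ((i : ℕ) : ZMod N)) (q ((i : ℕ) : ZMod N)))

lemma pauliString_pairs (hN : N = 2*M) (X : Finset (ZMod N)) (μ : ZMod N → Fin 3)
    (c c' : Cfg N) :
    pauliString N X μ c c'
      = ∏ i : Fin M, pairOp N M X μ i (c ((i : ℕ) : ZMod N), c (((i : ℕ) : ZMod N) + M))
          (c' ((i : ℕ) : ZMod N), c' (((i : ℕ) : ZMod N) + M)) := by
  rw [pauliString_apply, prod_pairs N M hN]
  exact Finset.prod_congr rfl fun i _ => rfl

lemma eap_apply (p q : ZMod N → Fin 2) (c : Cfg N) :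
    eapState N M p q c
      = ∏ i : Fin M, bell (p ((i : ℕ) : ZMod N)) (q ((i : ℕ) : ZMod N))
          (c ((i : ℕ) : ZMod N), c (((i : ℕ) : ZMod N) + M)) := by
  rw [eapState]
  exact Eq.symm <| Fin.prod_univ_eq_prod_range
    (fun j => bell (p (j : ZMod N)) (q (j : ZMod N)) (c (j : ZMod N), c ((j : ZMod N) + M))) M

lemma string_mulVec (hN : N = 2*M) (p q : ZMod N → Fin 2) (X : Finset (ZMod N))
    (μ : ZMod N → Fin 3) (c : Cfg N) :
    (pauliString N X μ).mulVec (eapState N M p q) c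
      = ∏ i : Fin M, pairVec N M X μ p q i
          (c ((i : ℕ) : ZMod N), c (((i : ℕ) : ZMod N) + M)) := by
  simp only [Matrix.mulVec, dotProduct]
  have h1 : ∀ c' : Cfg N, pauliString N X μ c c' * eapState N M p q c'
      = ∏ i : Fin M,
          (pairOp N M X μ i (c ((i : ℕ) : ZMod N), c (((i : ℕ) : ZMod N) + M))
              (c' ((i : ℕ) : ZMod N), c' (((i : ℕ) : ZMod N) + M))
            * bell (p ((i : ℕ) : ZMod N)) (q ((i : ℕ) : ZMod N))
              (c' ((i : ℕ) : ZMod N), c' (((i : ℕ) : ZMod N) + M))) := fun c' => by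
    rw [pauliString_pairs N M hN, eap_apply, ← Finset.prod_mul_distrib]
  rw [Finset.sum_congr rfl fun c' _ => h1 c']
  rw [sum_cfg N M hN (fun i t =>
    pairOp N M X μ i (c ((i : ℕ) : ZMod N), c (((i : ℕ) : ZMod N) + M)) t
      * bell (p ((i : ℕ) : ZMod N)) (q ((i : ℕ) : ZMod N)) t)]
  exact Finset.prod_congr rfl fun i _ => rfl

lemma string_pairing (hN : N = 2*M) (p q : ZMod N → Fin 2) (X Y : Finset (ZMod N))
    (μ κ : ZMod N → Fin 3) :
    ∑ c : Cfg N, (pauliString N X μ).mulVec (eapState N M p q) c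
        * (pauliString N Y κ).mulVec (eapState N M p q) c
      = ∏ i : Fin M, pairB (pairVec N M X μ p q i) (pairVec N M Y κ p q i) := by
  have h1 : ∀ c : Cfg N, (pauliString N X μ).mulVec (eapState N M p q) c
        * (pauliString N Y κ).mulVec (eapState N M p q) c
      = ∏ i : Fin M, (pairVec N M X μ p q i (c ((i : ℕ) : ZMod N), c (((i : ℕ) : ZMod N) + M))
          * pairVec N M Y κ p q i (c ((i : ℕ) : ZMod N), c (((i : ℕ) : ZMod N) + M))) := fun c => by
    rw [string_mulVec N M hN, string_mulVec N M hN, ← Finset.prod_mul_distrib]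
  rw [Finset.sum_congr rfl fun c _ => h1 c]
  rw [sum_cfg N M hN (fun i t => pairVec N M X μ p q i t * pairVec N M Y κ p q i t)]
  rfl

end Chain4

section Chain5
variable (N M : ℕ) [NeZero N]

lemma MM (hN : N = 2*M) : (M : ZMod N) + (M : ZMod N) = 0 := by
  have h : ((2*M : ℕ) : ZMod N) = 0 := by rw [← hN]; exact ZMod.natCast_self N
  push_cast at h
  rw [← two_mul]
  exact h

lemma addMM (hN : N = 2*M) (j : ZMod N) : j + (M : ZMod N) + (M : ZMod N) = j := by
  rw [add_assoc, MM N M hN, add_zero]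

lemma negM (hN : N = 2*M) : -(M : ZMod N) = (M : ZMod N) :=
  neg_eq_of_add_eq_zero_left (MM N M hN)

lemma subM (hN : N = 2*M) (j : ZMod N) : j - (M : ZMod N) = j + (M : ZMod N) := by
  rw [sub_eq_add_neg, negM N M hN]

lemma mem_imageM (hN : N = 2*M) (X : Finset (ZMod N)) (j : ZMod N) :
    j ∈ X.image (· + (M : ZMod N)) ↔ j + (M : ZMod N) ∈ X := by
  constructor
  · rintro hj
    obtain ⟨x, hx, hxe⟩ := Finset.mem_image.mp hj
    have : x = j + (M : ZMod N) := by
      have := congrArg (· + (M : ZMod N)) hxe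
      simpa [addMM N M hN] using this
    rwa [← this]
  · intro hj
    exact Finset.mem_image.mpr ⟨j + M, hj, addMM N M hN j⟩

lemma imageMM (hN : N = 2*M) (X : Finset (ZMod N)) :
    (X.image (· + (M : ZMod N))).image (· + (M : ZMod N)) = X := by
  ext j
  rw [mem_imageM N M hN, mem_imageM N M hN, addMM N M hN]

lemma valM (hN : N = 2*M) : (M : ZMod N).val = M := by
  have hM : 0 < M := by have := Nat.pos_of_ne_zero (NeZero.ne N); omega
  exact ZMod.val_cast_of_lt (by omega)

def cdist (a b : ZMod N) : ℕ := min (a - b).val (b - a).val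

lemma cdist_le_diam (X : Finset (ZMod N)) (a b : ZMod N) (ha : a ∈ X) (hb : b ∈ X) :
    cdist N a b ≤ diam N X :=
  le_trans (Finset.le_sup (f := fun b => min (a - b).val (b - a).val) hb)
    (Finset.le_sup (f := fun a => X.sup fun b => min (a - b).val (b - a).val) ha)

lemma cdist_antipode (hN : N = 2*M) (a b : ZMod N) :
    cdist N a b + cdist N (a + (M : ZMod N)) b = M := by
  have hM : 0 < M := by have := Nat.pos_of_ne_zero (NeZero.ne N); omega
  have key : ∀ x : ZMod N, min x.val (-x).val + min (x + M).val (-(x + M)).val = M := by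
    intro x
    have hvx : x.val < N := ZMod.val_lt x
    have hvxM : (x + M).val = (x.val + M) % N := by rw [ZMod.val_add, valM N M hN]
    have hnx : (-x).val = if x = 0 then 0 else N - x.val := ZMod.neg_val x
    have hnxM : (-(x + M)).val = if x + M = 0 then 0 else N - (x + M).val :=
      ZMod.neg_val _
    have hx0 : x = 0 ↔ x.val = 0 := (ZMod.val_eq_zero x).symm
    have hxM0 : x + M = 0 ↔ (x + M).val = 0 := (ZMod.val_eq_zero _).symm
    by_cases hu : x.val < M
    · have hmod : (x.val + M) % N = x.val + M := Nat.mod_eq_of_lt (by omega)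
      by_cases hz : x = 0
      · have hx0v : x.val = 0 := hx0.mp hz
        have hxM : ¬ (x + (M : ZMod N) = 0) := fun h => by
          have h2 := hxM0.mp h; rw [hvxM, hmod] at h2; omega
        rw [hnx, if_pos hz, hnxM, if_neg hxM, hvxM, hmod]
        omega
      · have hxv0 : x.val ≠ 0 := fun h => hz (hx0.mpr h)
        have hxM : ¬ (x + M = 0) := fun h => by
          have := hxM0.mp h; rw [hvxM, hmod] at this; omega
        rw [hnx, if_neg hz, hnxM, if_neg hxM, hvxM, hmod]
        omega
    · have hmod : (x.val + M) % N = x.val - M := by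
        have : x.val + M - N < N := by omega
        rw [Nat.mod_eq_sub_mod (by omega), Nat.mod_eq_of_lt this]
        omega
      have hz : ¬ x = 0 := fun h => by rw [hx0] at h; omega
      by_cases hxM : x + M = 0
      · have : (x + M).val = 0 := hxM0.mp hxM
        rw [hvxM, hmod] at this
        rw [hnx, if_neg hz, hnxM, if_pos hxM, hvxM, hmod]
        omega
      · rw [hnx, if_neg hz, hnxM, if_neg hxM, hvxM, hmod]
        omega
  have e1 : b - a = -(a - b) := by ring
  have e2 : a + (M : ZMod N) - b = (a - b) + M := by ring
  have e3 : b - (a + (M : ZMod N)) = -((a - b) + M) := by ring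
  rw [cdist, cdist, e1, e2, e3]
  exact key (a - b)

lemma cdist_self_antipode (hN : N = 2*M) (j : ZMod N) : cdist N (j + (M : ZMod N)) j = M := by
  have h := cdist_antipode N M hN j j
  have : cdist N j j = 0 := by simp [cdist]
  omega

lemma diam_image (hN : N = 2*M) (X : Finset (ZMod N)) :
    diam N (X.image (· + (M : ZMod N))) = diam N X := by
  unfold diam
  rw [Finset.sup_image]
  refine Finset.sup_congr rfl fun a _ => ?_
  simp only [Function.comp_apply]
  rw [Finset.sup_image]
  refine Finset.sup_congr rfl fun b _ => ?_
  simp only [Function.comp_apply]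
  rw [show a + (M : ZMod N) - (b + M) = a - b by ring,
    show b + (M : ZMod N) - (a + M) = b - a by ring]

lemma inter_free (hN : N = 2*M) (X : Finset (ZMod N)) (h4 : 4 * diam N X < N) :
    ∀ j ∈ X, j + (M : ZMod N) ∉ X := by
  intro j hj hjM
  have h1 : M ≤ diam N X := by
    rw [← cdist_self_antipode N M hN j]
    exact cdist_le_diam N X _ _ hjM hj
  omega

end Chain5

section Chain6
variable (N M : ℕ) [NeZero N]

lemma prod_mem_pairs (hN : N = 2*M) (X : Finset (ZMod N)) (F : ZMod N → ℂ)
    (hfree : ∀ j ∈ X, j + (M : ZMod N) ∉ X) :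
    ∏ j ∈ X, F j
      = ∏ i : Fin M, (if ((i : ℕ) : ZMod N) ∈ X then F ((i : ℕ) : ZMod N)
          else if ((i : ℕ) : ZMod N) + (M : ZMod N) ∈ X then F (((i : ℕ) : ZMod N) + M)
          else 1) := by
  have h0 : ∏ j ∈ X, F j = ∏ j : ZMod N, (if j ∈ X then F j else 1) := by
    rw [Finset.prod_ite_mem, Finset.univ_inter]
  rw [h0, prod_pairs N M hN]
  refine Finset.prod_congr rfl fun i _ => ?_
  by_cases h1 : ((i : ℕ) : ZMod N) ∈ X
  · have h2 : ¬ (((i : ℕ) : ZMod N) + (M : ZMod N) ∈ X) := hfree _ h1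
    simp [h1, h2]
  · by_cases h2 : ((i : ℕ) : ZMod N) + (M : ZMod N) ∈ X <;> simp [h1, h2]

def omegaFac (X : Finset (ZMod N)) (μ : ZMod N → Fin 3) (p q : ZMod N → Fin 2) (i : Fin M) : ℂ :=
  if ((i : ℕ) : ZMod N) ∈ X then
    omegaSign (p ((i : ℕ) : ZMod N)) (q ((i : ℕ) : ZMod N)) (μ ((i : ℕ) : ZMod N))
  else if ((i : ℕ) : ZMod N) + (M : ZMod N) ∈ X then
    omegaSign (p (((i : ℕ) : ZMod N) + M)) (q (((i : ℕ) : ZMod N) + M)) (μ (((i : ℕ) : ZMod N) + M))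
  else 1

lemma prod_omegaFac (hN : N = 2*M) (X : Finset (ZMod N)) (μ : ZMod N → Fin 3)
    (p q : ZMod N → Fin 2) (hfree : ∀ j ∈ X, j + (M : ZMod N) ∉ X) :
    ∏ j ∈ X, omegaSign (p j) (q j) (μ j) = ∏ i : Fin M, omegaFac N M X μ p q i :=
  prod_mem_pairs N M hN X _ hfree

lemma pairVec_flip (hN : N = 2*M) (p q : ZMod N → Fin 2)
    (hp : ∀ j : ZMod N, p (j + (M : ZMod N)) = p j) (hq : ∀ j : ZMod N, q (j + (M : ZMod N)) = q j)
    (X : Finset (ZMod N)) (μ : ZMod N → Fin 3)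
    (hfree : ∀ j ∈ X, j + (M : ZMod N) ∉ X) (i : Fin M) :
    pairVec N M X μ p q i
      = omegaFac N M X μ p q i •
        pairVec N M (X.image (· + (M : ZMod N))) (fun k => μ (k - (M : ZMod N))) p q i := by
  set a := ((i : ℕ) : ZMod N) with ha
  have him1 : a ∈ X.image (· + (M : ZMod N)) ↔ a + M ∈ X := mem_imageM N M hN X a
  have him2 : a + (M : ZMod N) ∈ X.image (· + (M : ZMod N)) ↔ a ∈ X := by
    rw [mem_imageM N M hN X, addMM N M hN]
  have hν1 : μ (a - (M : ZMod N)) = μ (a + M) := by rw [subM N M hN]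
  have hν2 : μ (a + (M : ZMod N) - M) = μ a := by rw [sub_eq_add_neg, add_assoc, negM N M hN,
    MM N M hN, add_zero]
  unfold pairVec pairOp siteOp omegaFac
  by_cases h1 : a ∈ X
  · have h2 : ¬ (a + (M : ZMod N) ∈ X) := hfree _ h1
    rw [if_pos h1, if_neg h2, if_neg (fun h => h2 (him1.mp h)), if_pos (him2.mpr h1)]
    rw [← ha, if_pos h1]
    beta_reduce
    rw [hν2]
    rw [flip_pair (p a) (q a) (μ a), smul_smul, omega_mul_self, one_smul]
  · by_cases h2 : a + (M : ZMod N) ∈ X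
    · rw [if_neg h1, if_pos h2, if_pos (him1.mpr h2), if_neg (fun h => h1 (him2.mp h))]
      rw [← ha, if_neg h1, if_pos h2]
      beta_reduce
      rw [hν1]
      rw [← hp a, ← hq a]
      exact flip_pair (p (a + M)) (q (a + M)) (μ (a + M))
    · rw [if_neg h1, if_neg h2, if_neg (fun h => h2 (him1.mp h)),
        if_neg (fun h => h1 (him2.mp h)), ← ha, if_neg h1, if_neg h2, one_smul]

lemma string_flip (hN : N = 2*M) (p q : ZMod N → Fin 2)
    (hp : ∀ j : ZMod N, p (j + (M : ZMod N)) = p j) (hq : ∀ j : ZMod N, q (j + (M : ZMod N)) = q j)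
    (X : Finset (ZMod N)) (μ : ZMod N → Fin 3)
    (hfree : ∀ j ∈ X, j + (M : ZMod N) ∉ X) :
    (pauliString N X μ).mulVec (eapState N M p q)
      = (∏ j ∈ X, omegaSign (p j) (q j) (μ j)) •
        (pauliString N (X.image (· + (M : ZMod N))) (fun k => μ (k - (M : ZMod N)))).mulVec
          (eapState N M p q) := by
  funext c
  rw [Pi.smul_apply, string_mulVec N M hN, string_mulVec N M hN, smul_eq_mul,
    prod_omegaFac N M hN X μ p q hfree, ← Finset.prod_mul_distrib]
  refine Finset.prod_congr rfl fun i _ => ?_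
  rw [pairVec_flip N M hN p q hp hq X μ hfree i, Pi.smul_apply, smul_eq_mul]

lemma sum_mulVec {ι : Type*} (s : Finset ι) (A : ι → Matrix (Cfg N) (Cfg N) ℂ) (v : Cfg N → ℂ) :
    (∑ x ∈ s, A x).mulVec v = ∑ x ∈ s, (A x).mulVec v := by
  funext c
  rw [Finset.sum_apply]
  simp only [Matrix.mulVec, dotProduct, Matrix.sum_apply, Finset.sum_mul]
  rw [Finset.sum_comm]

lemma ham_mulVec (J : Finset (ZMod N) → (ZMod N → Fin 3) → ℝ) (v : Cfg N → ℂ) :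
    (ham N J).mulVec v
      = ∑ X : Finset (ZMod N), ∑ μ : ZMod N → Fin 3,
          (J X μ : ℂ) • (pauliString N X μ).mulVec v := by
  rw [ham, sum_mulVec]
  refine Finset.sum_congr rfl fun X _ => ?_
  rw [sum_mulVec]
  exact Finset.sum_congr rfl fun μ _ => Matrix.smul_mulVec _ _ _

end Chain6

section Main
variable (N M : ℕ) [NeZero N]

lemma forward_dir (hN : N = 2*M) (p q : ZMod N → Fin 2)
    (hp : ∀ j : ZMod N, p (j + (M : ZMod N)) = p j)
    (hq : ∀ j : ZMod N, q (j + (M : ZMod N)) = q j)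
    (J : Finset (ZMod N) → (ZMod N → Fin 3) → ℝ)
    (hloc : ∀ X μ, N ≤ 4 * diam N X → J X μ = 0)
    (htr : ∀ μ, J ∅ μ = 0)
    (hcond : ∀ X (μ : ZMod N → Fin 3),
        (J (X.image (· + (M : ZMod N))) (fun k => μ (k - (M : ZMod N))) : ℂ) =
          -(J X μ : ℂ) * ∏ j ∈ X, omegaSign (p j) (q j) (μ j)) :
    (ham N J).mulVec (eapState N M p q) = (0 : ℂ) • eapState N M p q := by
  rw [ham_mulVec, zero_smul]
  rw [← Finset.sum_product']
  refine Finset.sum_ninvolution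
    (fun a => (a.1.image (· + (M : ZMod N)), fun k => a.2 (k - (M : ZMod N)))) ?_ ?_
    (fun _ => Finset.mem_univ _) ?_
  · rintro ⟨X, μ⟩
    simp only
    by_cases hfree : ∀ j ∈ X, j + (M : ZMod N) ∉ X
    · rw [string_flip N M hN p q hp hq X μ hfree, smul_smul, hcond X μ, ← add_smul]
      rw [show (J X μ : ℂ) * (∏ j ∈ X, omegaSign (p j) (q j) (μ j))
          + -(J X μ : ℂ) * ∏ j ∈ X, omegaSign (p j) (q j) (μ j) = 0 by ring, zero_smul]
    · push_neg at hfree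
      obtain ⟨j, hj, hjM⟩ := hfree
      have hdiam : M ≤ diam N X := by
        rw [← cdist_self_antipode N M hN j]
        exact cdist_le_diam N X _ _ hjM hj
      have hJ : J X μ = 0 := hloc X μ (by omega)
      have hJ2 := hcond X μ
      rw [hJ] at hJ2
      push_cast at hJ2
      rw [hJ, hJ2]
      push_cast
      simp
  · rintro ⟨X, μ⟩ hfa hga
    apply hfa
    have hX : X.image (· + (M : ZMod N)) = X := congrArg Prod.fst hga
    rcases Finset.eq_empty_or_nonempty X with rfl | ⟨j, hj⟩
    · rw [htr μ]
      push_cast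
      simp
    · have hjM : j + (M : ZMod N) ∈ X := by
        rw [← hX] at hj
        exact (mem_imageM N M hN X j).mp hj
      have hdiam : M ≤ diam N X := by
        rw [← cdist_self_antipode N M hN j]
        exact cdist_le_diam N X _ _ hjM hj
      have hJ : J X μ = 0 := hloc X μ (by omega)
      rw [hJ]
      push_cast
      simp
  · rintro ⟨X, μ⟩
    refine Prod.ext ?_ ?_
    · exact imageMM N M hN X
    · funext k
      simp only
      rw [subM N M hN, subM N M hN, addMM N M hN]

end Main

section Chain7
variable (N M : ℕ) [NeZero N]

lemma pauliString_empty (μ : ZMod N → Fin 3) : pauliString N ∅ μ = 1 := by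
  ext c c'
  simp [pauliString, Matrix.one_apply, funext_iff]

lemma pairVec_eq (X : Finset (ZMod N)) (μ : ZMod N → Fin 3) (p q : ZMod N → Fin 2) (i : Fin M) :
    pairVec N M X μ p q i
      = (pairK (if ((i : ℕ) : ZMod N) ∈ X then pauli (μ ((i : ℕ) : ZMod N)) else 1)
          (if ((i : ℕ) : ZMod N) + (M : ZMod N) ∈ X
            then pauli (μ (((i : ℕ) : ZMod N) + M)) else 1)).mulVec
          (bell (p ((i : ℕ) : ZMod N)) (q ((i : ℕ) : ZMod N))) := rfl

lemma pairVec_empty (κ : ZMod N → Fin 3) (p q : ZMod N → Fin 2) (i : Fin M) :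
    pairVec N M ∅ κ p q i = bell (p ((i : ℕ) : ZMod N)) (q ((i : ℕ) : ZMod N)) := by
  rw [pairVec_eq]
  simp only [Finset.notMem_empty, if_false]
  exact pairK_one_mulVec _

def epsFac (X₀ : Finset (ZMod N)) (μ₀ : ZMod N → Fin 3) (i : Fin M) : ℂ :=
  if ((i : ℕ) : ZMod N) ∈ X₀ then eps (μ₀ ((i : ℕ) : ZMod N))
  else if ((i : ℕ) : ZMod N) + (M : ZMod N) ∈ X₀ then eps (μ₀ (((i : ℕ) : ZMod N) + M))
  else 1

lemma epsFac_ne_zero (X₀ : Finset (ZMod N)) (μ₀ : ZMod N → Fin 3) (i : Fin M) :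
    epsFac N M X₀ μ₀ i ≠ 0 := by
  unfold epsFac
  split_ifs <;> first | exact eps_ne_zero _ | exact one_ne_zero

lemma G_self (hN : N = 2*M) (p q : ZMod N → Fin 2) (X₀ : Finset (ZMod N))
    (μ₀ μ : ZMod N → Fin 3) (hfree₀ : ∀ j ∈ X₀, j + (M : ZMod N) ∉ X₀)
    (hagree : ∀ j ∈ X₀, μ j = μ₀ j) (i : Fin M) :
    pairB (pairVec N M X₀ μ₀ p q i) (pairVec N M X₀ μ p q i) = epsFac N M X₀ μ₀ i := by
  rw [pairVec_eq, pairVec_eq]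
  unfold epsFac
  by_cases h1 : ((i : ℕ) : ZMod N) ∈ X₀
  · have h2 : ¬ (((i : ℕ) : ZMod N) + (M : ZMod N) ∈ X₀) := hfree₀ _ h1
    rw [if_pos h1, if_pos h1, if_pos h1, if_neg h2, if_neg h2, hagree _ h1,
      gram_pauli, if_pos rfl]
  · by_cases h2 : ((i : ℕ) : ZMod N) + (M : ZMod N) ∈ X₀
    · rw [if_neg h1, if_neg h1, if_neg h1, if_pos h2, if_pos h2, if_pos h2, hagree _ h2]
      rw [flip_pair, pairB_smul_left, pairB_smul_right, gram_pauli, if_pos rfl,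
        ← mul_assoc, omega_mul_self, one_mul]
    · rw [if_neg h1, if_neg h1, if_neg h1, if_neg h2, if_neg h2, if_neg h2,
        pairK_one_mulVec, gram_bell]
end Chain7

section Chain8
variable (N M : ℕ) [NeZero N]

lemma G_shift (hN : N = 2*M) (p q : ZMod N → Fin 2)
    (hp : ∀ j : ZMod N, p (j + (M : ZMod N)) = p j)
    (hq : ∀ j : ZMod N, q (j + (M : ZMod N)) = q j)
    (X₀ : Finset (ZMod N)) (μ₀ μ : ZMod N → Fin 3)
    (hfree₀ : ∀ j ∈ X₀, j + (M : ZMod N) ∉ X₀)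
    (hagree : ∀ j ∈ X₀.image (· + (M : ZMod N)), μ j = μ₀ (j - (M : ZMod N))) (i : Fin M) :
    pairB (pairVec N M X₀ μ₀ p q i) (pairVec N M (X₀.image (· + (M : ZMod N))) μ p q i)
      = epsFac N M X₀ μ₀ i * omegaFac N M X₀ μ₀ p q i := by
  set a := ((i : ℕ) : ZMod N) with ha
  have him1 : a ∈ X₀.image (· + (M : ZMod N)) ↔ a + M ∈ X₀ := mem_imageM N M hN X₀ a
  have him2 : a + (M : ZMod N) ∈ X₀.image (· + (M : ZMod N)) ↔ a ∈ X₀ := by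
    rw [mem_imageM N M hN X₀, addMM N M hN]
  rw [pairVec_eq, pairVec_eq]
  unfold epsFac omegaFac
  rw [← ha]
  by_cases h1 : a ∈ X₀
  · have h2 : ¬ (a + (M : ZMod N) ∈ X₀) := hfree₀ _ h1
    have hμ : μ (a + (M : ZMod N)) = μ₀ a := by
      rw [hagree _ (him2.mpr h1), subM N M hN, addMM N M hN]
    rw [if_pos h1, if_neg h2, if_neg (fun h => h2 (him1.mp h)), if_pos (him2.mpr h1),
      if_pos h1, if_pos h1, hμ, flip_pair, pairB_smul_right, gram_pauli, if_pos rfl]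
    ring
  · by_cases h2 : a + (M : ZMod N) ∈ X₀
    · have hμ : μ a = μ₀ (a + (M : ZMod N)) := by
        rw [hagree _ (him1.mpr h2), subM N M hN]
      rw [if_neg h1, if_pos h2, if_pos (him1.mpr h2), if_neg (fun h => h1 (him2.mp h)),
        if_neg h1, if_neg h1, if_pos h2, if_pos h2, hμ, flip_pair, pairB_smul_left,
        gram_pauli, if_pos rfl, ← hp a, ← hq a]
      ring
    · rw [if_neg h1, if_neg h2, if_neg (fun h => h2 (him1.mp h)),
        if_neg (fun h => h1 (him2.mp h)), if_neg h1, if_neg h1, if_neg h2, if_neg h2,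
        pairK_one_mulVec, gram_bell]
      ring

lemma pairB_classify (hN : N = 2*M) (p q : ZMod N → Fin 2)
    (X₀ X : Finset (ZMod N)) (μ₀ μ : ZMod N → Fin 3)
    (hfree₀ : ∀ j ∈ X₀, j + (M : ZMod N) ∉ X₀)
    (hfree : ∀ j ∈ X, j + (M : ZMod N) ∉ X) (i : Fin M)
    (hnz : pairB (pairVec N M X₀ μ₀ p q i) (pairVec N M X μ p q i) ≠ 0) :
    (((((i : ℕ) : ZMod N) ∈ X ↔ ((i : ℕ) : ZMod N) ∈ X₀)
        ∧ (((i : ℕ) : ZMod N) + (M : ZMod N) ∈ X ↔ ((i : ℕ) : ZMod N) + (M : ZMod N) ∈ X₀))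
      ∧ (((i : ℕ) : ZMod N) ∈ X₀ → μ ((i : ℕ) : ZMod N) = μ₀ ((i : ℕ) : ZMod N))
      ∧ (((i : ℕ) : ZMod N) + (M : ZMod N) ∈ X₀
          → μ (((i : ℕ) : ZMod N) + M) = μ₀ (((i : ℕ) : ZMod N) + M)))
    ∨ (((((i : ℕ) : ZMod N) ∈ X ↔ ((i : ℕ) : ZMod N) + (M : ZMod N) ∈ X₀)
        ∧ (((i : ℕ) : ZMod N) + (M : ZMod N) ∈ X ↔ ((i : ℕ) : ZMod N) ∈ X₀))
      ∧ (((i : ℕ) : ZMod N) ∈ X₀ → μ (((i : ℕ) : ZMod N) + M) = μ₀ ((i : ℕ) : ZMod N))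
      ∧ (((i : ℕ) : ZMod N) + (M : ZMod N) ∈ X₀
          → μ ((i : ℕ) : ZMod N) = μ₀ (((i : ℕ) : ZMod N) + M))) := by
  set a := ((i : ℕ) : ZMod N) with ha
  rw [pairVec_eq, pairVec_eq, ← ha] at hnz
  by_cases h1 : a ∈ X₀
  · have h2 : ¬ (a + (M : ZMod N) ∈ X₀) := hfree₀ _ h1
    rw [if_pos h1, if_neg h2] at hnz
    by_cases h3 : a ∈ X
    · have h4 : ¬ (a + (M : ZMod N) ∈ X) := hfree _ h3
      rw [if_pos h3, if_neg h4, gram_pauli] at hnz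
      have hμ : μ₀ a = μ a := by
        by_contra hne
        exact hnz (if_neg hne)
      exact Or.inl ⟨⟨⟨fun _ => h1, fun _ => h3⟩, ⟨fun h => (h4 h).elim, fun h => (h2 h).elim⟩⟩,
        fun _ => hμ.symm, fun h => (h2 h).elim⟩
    · by_cases h4 : a + (M : ZMod N) ∈ X
      · rw [if_neg h3, if_pos h4, flip_pair, pairB_smul_right] at hnz
        rw [gram_pauli] at hnz
        have hμ : μ₀ a = μ (a + M) := by
          by_contra hne
          rw [if_neg hne, mul_zero] at hnz
          exact hnz rfl
        exact Or.inr ⟨⟨⟨fun h => (h3 h).elim, fun h => (h2 h).elim⟩, ⟨fun _ => h1, fun _ => h4⟩⟩,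
          fun _ => hμ.symm, fun h => (h2 h).elim⟩
      · rw [if_neg h3, if_neg h4, pairK_one_mulVec, pairB_comm, gram_bell_pauli] at hnz
        exact (hnz rfl).elim
  · by_cases h2 : a + (M : ZMod N) ∈ X₀
    · rw [if_neg h1, if_pos h2, flip_pair, pairB_smul_left] at hnz
      by_cases h3 : a ∈ X
      · have h4 : ¬ (a + (M : ZMod N) ∈ X) := hfree _ h3
        rw [if_pos h3, if_neg h4, gram_pauli] at hnz
        have hμ : μ₀ (a + M) = μ a := by
          by_contra hne
          rw [if_neg hne, mul_zero] at hnz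
          exact hnz rfl
        exact Or.inr ⟨⟨⟨fun _ => h2, fun _ => h3⟩, ⟨fun h => (h4 h).elim, fun h => (h1 h).elim⟩⟩,
          fun h => (h1 h).elim, fun _ => hμ.symm⟩
      · by_cases h4 : a + (M : ZMod N) ∈ X
        · rw [if_neg h3, if_pos h4, flip_pair, pairB_smul_right, gram_pauli] at hnz
          have hμ : μ₀ (a + M) = μ (a + M) := by
            by_contra hne
            rw [if_neg hne, mul_zero, mul_zero] at hnz
            exact hnz rfl
          exact Or.inl ⟨⟨⟨fun h => (h3 h).elim, fun h => (h1 h).elim⟩,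
            ⟨fun _ => h2, fun _ => h4⟩⟩, fun h => (h1 h).elim, fun _ => hμ.symm⟩
        · rw [if_neg h3, if_neg h4, pairK_one_mulVec, pairB_comm, gram_bell_pauli,
            mul_zero] at hnz
          exact (hnz rfl).elim
    · rw [if_neg h1, if_neg h2, pairK_one_mulVec] at hnz
      by_cases h3 : a ∈ X
      · have h4 : ¬ (a + (M : ZMod N) ∈ X) := hfree _ h3
        rw [if_pos h3, if_neg h4, gram_bell_pauli] at hnz
        exact (hnz rfl).elim
      · by_cases h4 : a + (M : ZMod N) ∈ X
        · rw [if_neg h3, if_pos h4, flip_pair, pairB_smul_right, gram_bell_pauli,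
            mul_zero] at hnz
          exact (hnz rfl).elim
        · exact Or.inl ⟨⟨⟨fun h => (h3 h).elim, fun h => (h1 h).elim⟩,
            ⟨fun h => (h4 h).elim, fun h => (h2 h).elim⟩⟩,
            fun h => (h1 h).elim, fun h => (h2 h).elim⟩

end Chain8

section Chain9
variable (N M : ℕ) [NeZero N]

lemma fin2_cases (k : Fin 2) : k = 0 ∨ k = 1 := by
  fin_cases k
  · exact Or.inl rfl
  · exact Or.inr rfl

lemma X0_ne_image (hN : N = 2*M) (X₀ : Finset (ZMod N)) (hne : X₀.Nonempty)
    (hfree₀ : ∀ j ∈ X₀, j + (M : ZMod N) ∉ X₀) :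
    X₀ ≠ X₀.image (· + (M : ZMod N)) := by
  intro h
  obtain ⟨j, hj⟩ := hne
  have : j + (M : ZMod N) ∈ X₀ := by
    have hj2 : j ∈ X₀.image (· + (M : ZMod N)) := h ▸ hj
    exact (mem_imageM N M hN X₀ j).mp hj2
  exact hfree₀ j hj this

lemma term_classify (hN : N = 2*M) (p q : ZMod N → Fin 2)
    (hp : ∀ j : ZMod N, p (j + (M : ZMod N)) = p j)
    (hq : ∀ j : ZMod N, q (j + (M : ZMod N)) = q j)
    (J : Finset (ZMod N) → (ZMod N → Fin 3) → ℝ)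
    (hres : ∀ X (μ μ' : ZMod N → Fin 3), (∀ j ∈ X, μ j = μ' j) → J X μ = J X μ')
    (hloc : ∀ X μ, N ≤ 4 * diam N X → J X μ = 0)
    (X₀ : Finset (ZMod N)) (μ₀ : ZMod N → Fin 3) (hne : X₀.Nonempty)
    (h4 : 4 * diam N X₀ < N) (X : Finset (ZMod N)) (μ : ZMod N → Fin 3) :
    (J X μ : ℂ) * ∏ i : Fin M, pairB (pairVec N M X₀ μ₀ p q i) (pairVec N M X μ p q i)
      = (if X = X₀ ∧ (∀ j ∈ X₀, μ j = μ₀ j)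
          then (J X₀ μ₀ : ℂ) * ∏ i : Fin M, epsFac N M X₀ μ₀ i else 0)
        + (if X = X₀.image (· + (M : ZMod N))
              ∧ (∀ j ∈ X₀.image (· + (M : ZMod N)), μ j = μ₀ (j - (M : ZMod N)))
          then (J (X₀.image (· + (M : ZMod N))) (fun k => μ₀ (k - (M : ZMod N))) : ℂ)
            * ((∏ i : Fin M, epsFac N M X₀ μ₀ i) * ∏ j ∈ X₀, omegaSign (p j) (q j) (μ₀ j))
          else 0) := by
  have hfree₀ : ∀ j ∈ X₀, j + (M : ZMod N) ∉ X₀ := inter_free N M hN X₀ h4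
  have hX0ne : X₀ ≠ X₀.image (· + (M : ZMod N)) := X0_ne_image N M hN X₀ hne hfree₀
  by_cases hg1 : X = X₀ ∧ (∀ j ∈ X₀, μ j = μ₀ j)
  · obtain ⟨rfl, hagr⟩ := hg1
    rw [if_pos ⟨rfl, hagr⟩, if_neg (fun hg2 => hX0ne hg2.1), add_zero, hres X μ μ₀ hagr]
    congr 1
    exact Finset.prod_congr rfl fun i _ => G_self N M hN p q X μ₀ μ hfree₀ hagr i
  · rw [if_neg hg1]
    by_cases hg2 : X = X₀.image (· + (M : ZMod N))
        ∧ (∀ j ∈ X₀.image (· + (M : ZMod N)), μ j = μ₀ (j - (M : ZMod N)))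
    · rw [if_pos hg2, zero_add]
      obtain ⟨rfl, hagr⟩ := hg2
      rw [hres _ μ (fun k => μ₀ (k - (M : ZMod N))) hagr]
      congr 1
      rw [prod_omegaFac N M hN X₀ μ₀ p q hfree₀, ← Finset.prod_mul_distrib]
      exact Finset.prod_congr rfl fun i _ => G_shift N M hN p q hp hq X₀ μ₀ μ hfree₀ hagr i
    · rw [if_neg hg2, add_zero]
      by_cases hJ : J X μ = 0
      · rw [hJ]
        push_cast
        ring
      have hdX : 4 * diam N X < N := by
        by_contra hcon
        exact hJ (hloc X μ (by omega))
      have hfree : ∀ j ∈ X, j + (M : ZMod N) ∉ X := inter_free N M hN X hdX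
      by_cases hz : ∃ i : Fin M, pairB (pairVec N M X₀ μ₀ p q i) (pairVec N M X μ p q i) = 0
      · obtain ⟨i0, hi0⟩ := hz
        rw [Finset.prod_eq_zero (Finset.mem_univ i0) hi0, mul_zero]
      push_neg at hz
      exfalso
      have hstruct := fun i => pairB_classify N M hN p q X₀ X μ₀ μ hfree₀ hfree i (hz i)
      by_cases hall : ∀ i : Fin M, ((((i : ℕ) : ZMod N) ∈ X ↔ ((i : ℕ) : ZMod N) ∈ X₀)
          ∧ (((i : ℕ) : ZMod N) + (M : ZMod N) ∈ X ↔ ((i : ℕ) : ZMod N) + (M : ZMod N) ∈ X₀))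
      · apply hg1
        have hXX : X = X₀ := by
          ext j
          obtain ⟨⟨i, k⟩, rfl⟩ := (pairEquiv N M hN).surjective j
          rcases fin2_cases k with rfl | rfl
          · rw [pairEquiv_zero]
            exact (hall i).1
          · rw [pairEquiv_one]
            exact (hall i).2
        subst hXX
        refine ⟨rfl, fun j hj => ?_⟩
        obtain ⟨⟨i, k⟩, rfl⟩ := (pairEquiv N M hN).surjective j
        rcases fin2_cases k with rfl | rfl
        · rw [pairEquiv_zero] at hj ⊢
          rcases hstruct i with hS | hD
          · exact hS.2.1 hj
          · exact absurd (hD.1.1.mp ((hall i).1.mpr hj)) (hfree₀ _ hj)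
        · rw [pairEquiv_one] at hj ⊢
          rcases hstruct i with hS | hD
          · exact hS.2.2 hj
          · have h1 : ((i : ℕ) : ZMod N) ∈ X := hD.1.2.mp ((hall i).2.mpr hj)
            exact absurd hj (hfree₀ _ h1)
      · push_neg at hall
        obtain ⟨i₀, hi₀⟩ := hall
        have hD₀ : (((i₀ : ℕ) : ZMod N) ∈ X ↔ ((i₀ : ℕ) : ZMod N) + (M : ZMod N) ∈ X₀)
            ∧ (((i₀ : ℕ) : ZMod N) + (M : ZMod N) ∈ X ↔ ((i₀ : ℕ) : ZMod N) ∈ X₀) := by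
          rcases hstruct i₀ with hS | hD
          · exact absurd hS.1 (by
              intro h
              rcases hi₀ h.1 with ⟨h1, h2⟩ | ⟨h1, h2⟩
              · exact h2 (h.2.mp h1)
              · exact h1 (h.2.mpr h2))
          · exact hD.1
        have hsupp : ((i₀ : ℕ) : ZMod N) ∈ X₀ ∨ ((i₀ : ℕ) : ZMod N) + (M : ZMod N) ∈ X₀ := by
          by_contra hcon
          push_neg at hcon
          have hiff1 : ((i₀ : ℕ) : ZMod N) ∈ X ↔ ((i₀ : ℕ) : ZMod N) ∈ X₀ :=
            iff_of_false (fun h => hcon.2 (hD₀.1.mp h)) hcon.1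
          rcases hi₀ hiff1 with ⟨h1, h2⟩ | ⟨h1, h2⟩
          · exact hcon.1 (hD₀.2.mp h1)
          · exact hcon.2 h2
        obtain ⟨x, hx0, hxM⟩ : ∃ x, x ∈ X₀ ∧ x + (M : ZMod N) ∈ X := by
          rcases hsupp with h | h
          · exact ⟨((i₀ : ℕ) : ZMod N), h, hD₀.2.mpr h⟩
          · refine ⟨((i₀ : ℕ) : ZMod N) + (M : ZMod N), h, ?_⟩
            rw [addMM N M hN]
            exact hD₀.1.mpr h
        have hdiff : ∀ i : Fin M,
            (((i : ℕ) : ZMod N) ∈ X ↔ ((i : ℕ) : ZMod N) + (M : ZMod N) ∈ X₀)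
            ∧ (((i : ℕ) : ZMod N) + (M : ZMod N) ∈ X ↔ ((i : ℕ) : ZMod N) ∈ X₀) := by
          intro i
          rcases hstruct i with hS | hD
          · by_cases hA : ((i : ℕ) : ZMod N) ∈ X₀
            · exfalso
              have hy : ((i : ℕ) : ZMod N) ∈ X := hS.1.1.mpr hA
              have hd1 : cdist N x ((i : ℕ) : ZMod N) ≤ diam N X₀ :=
                cdist_le_diam N X₀ _ _ hx0 hA
              have hd2 : cdist N (x + (M : ZMod N)) ((i : ℕ) : ZMod N) ≤ diam N X :=
                cdist_le_diam N X _ _ hxM hy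
              have hsum := cdist_antipode N M hN x ((i : ℕ) : ZMod N)
              omega
            · by_cases hB : ((i : ℕ) : ZMod N) + (M : ZMod N) ∈ X₀
              · exfalso
                have hy : ((i : ℕ) : ZMod N) + (M : ZMod N) ∈ X := hS.1.2.mpr hB
                have hd1 : cdist N x (((i : ℕ) : ZMod N) + (M : ZMod N)) ≤ diam N X₀ :=
                  cdist_le_diam N X₀ _ _ hx0 hB
                have hd2 : cdist N (x + (M : ZMod N)) (((i : ℕ) : ZMod N) + (M : ZMod N))
                    ≤ diam N X := cdist_le_diam N X _ _ hxM hy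
                have hsum := cdist_antipode N M hN x (((i : ℕ) : ZMod N) + (M : ZMod N))
                omega
              · exact ⟨iff_of_false (fun h => hA (hS.1.1.mp h)) hB,
                  iff_of_false (fun h => hB (hS.1.2.mp h)) hA⟩
          · exact hD.1
        apply hg2
        have hXX : X = X₀.image (· + (M : ZMod N)) := by
          ext j
          obtain ⟨⟨i, k⟩, rfl⟩ := (pairEquiv N M hN).surjective j
          rcases fin2_cases k with rfl | rfl
          · rw [pairEquiv_zero, mem_imageM N M hN]
            exact (hdiff i).1
          · rw [pairEquiv_one, mem_imageM N M hN, addMM N M hN]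
            exact (hdiff i).2
        refine ⟨hXX, fun j hj => ?_⟩
        obtain ⟨⟨i, k⟩, rfl⟩ := (pairEquiv N M hN).surjective j
        rcases fin2_cases k with rfl | rfl
        · rw [pairEquiv_zero] at hj ⊢
          have hBX : ((i : ℕ) : ZMod N) + (M : ZMod N) ∈ X₀ :=
            (mem_imageM N M hN X₀ _).mp hj
          rw [subM N M hN]
          rcases hstruct i with hS | hD
          · exfalso
            have h1 : ((i : ℕ) : ZMod N) + (M : ZMod N) ∈ X := hS.1.2.mpr hBX
            exact hfree₀ _ ((hdiff i).2.mp h1) hBX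
          · exact hD.2.2 hBX
        · rw [pairEquiv_one] at hj ⊢
          have hAX : ((i : ℕ) : ZMod N) ∈ X₀ := by
            have := (mem_imageM N M hN X₀ _).mp hj
            rwa [addMM N M hN] at this
          rw [subM N M hN, addMM N M hN]
          rcases hstruct i with hS | hD
          · exfalso
            have h1 : ((i : ℕ) : ZMod N) ∈ X := hS.1.1.mpr hAX
            exact hfree₀ _ hAX ((hdiff i).1.mp h1)
          · exact hD.2.1 hAX

end Chain9

section Chain10
variable (N M : ℕ) [NeZero N]

lemma Tv_zero (hN : N = 2*M) (p q : ZMod N → Fin 2) (X₀ : Finset (ZMod N))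
    (μ₀ : ZMod N → Fin 3) (hne : X₀.Nonempty)
    (hfree₀ : ∀ j ∈ X₀, j + (M : ZMod N) ∉ X₀) :
    ∑ c : Cfg N, (pauliString N X₀ μ₀).mulVec (eapState N M p q) c * eapState N M p q c
      = 0 := by
  have h0 := string_pairing N M hN p q X₀ ∅ μ₀ μ₀
  rw [pauliString_empty, Matrix.one_mulVec] at h0
  rw [h0]
  obtain ⟨j, hj⟩ := hne
  obtain ⟨⟨i0, k⟩, rfl⟩ := (pairEquiv N M hN).surjective j
  apply Finset.prod_eq_zero (Finset.mem_univ i0)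
  rw [pairVec_empty]
  rcases fin2_cases k with rfl | rfl
  · rw [pairEquiv_zero] at hj
    rw [pairVec_eq, if_pos hj, if_neg (hfree₀ _ hj), pairB_comm, gram_bell_pauli]
  · rw [pairEquiv_one] at hj
    have hni : ((i0 : ℕ) : ZMod N) ∉ X₀ := fun h => hfree₀ _ h hj
    rw [pairVec_eq, if_neg hni, if_pos hj, flip_pair, pairB_smul_left, pairB_comm,
      gram_bell_pauli, mul_zero]

lemma main_sum_zero (hN : N = 2*M) (p q : ZMod N → Fin 2)
    (J : Finset (ZMod N) → (ZMod N → Fin 3) → ℝ) (lam : ℂ)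
    (heq : (ham N J).mulVec (eapState N M p q) = lam • eapState N M p q)
    (X₀ : Finset (ZMod N)) (μ₀ : ZMod N → Fin 3) (hne : X₀.Nonempty)
    (hfree₀ : ∀ j ∈ X₀, j + (M : ZMod N) ∉ X₀) :
    ∑ X : Finset (ZMod N), ∑ μ : ZMod N → Fin 3, (J X μ : ℂ)
      * ∏ i : Fin M, pairB (pairVec N M X₀ μ₀ p q i) (pairVec N M X μ p q i) = 0 := by
  have hT := congrArg (fun u : Cfg N → ℂ =>
    ∑ c : Cfg N, (pauliString N X₀ μ₀).mulVec (eapState N M p q) c * u c) heq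
  rw [ham_mulVec] at hT
  simp only [Finset.sum_apply, Pi.smul_apply, smul_eq_mul] at hT
  have e1 : ∀ c : Cfg N, (pauliString N X₀ μ₀).mulVec (eapState N M p q) c
      * (∑ X : Finset (ZMod N), ∑ μ : ZMod N → Fin 3,
          (J X μ : ℂ) * (pauliString N X μ).mulVec (eapState N M p q) c)
      = ∑ X : Finset (ZMod N), ∑ μ : ZMod N → Fin 3, (J X μ : ℂ)
          * ((pauliString N X₀ μ₀).mulVec (eapState N M p q) c
            * (pauliString N X μ).mulVec (eapState N M p q) c) := by
    intro c
    rw [Finset.mul_sum]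
    refine Finset.sum_congr rfl fun X _ => ?_
    rw [Finset.mul_sum]
    exact Finset.sum_congr rfl fun μ _ => by ring
  rw [Finset.sum_congr rfl fun c _ => e1 c, Finset.sum_comm] at hT
  rw [Finset.sum_congr rfl fun X _ => Finset.sum_comm] at hT
  have e2 : ∀ X : Finset (ZMod N), ∀ μ : ZMod N → Fin 3,
      (∑ c : Cfg N, (J X μ : ℂ) * ((pauliString N X₀ μ₀).mulVec (eapState N M p q) c
        * (pauliString N X μ).mulVec (eapState N M p q) c))
      = (J X μ : ℂ) * ∏ i : Fin M, pairB (pairVec N M X₀ μ₀ p q i) (pairVec N M X μ p q i) := by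
    intro X μ
    rw [← Finset.mul_sum, string_pairing N M hN p q X₀ X μ₀ μ]
  rw [Finset.sum_congr rfl fun X _ => Finset.sum_congr rfl fun μ _ => e2 X μ] at hT
  rw [hT]
  have e3 : ∀ c : Cfg N, (pauliString N X₀ μ₀).mulVec (eapState N M p q) c
      * (lam * eapState N M p q c)
      = lam * ((pauliString N X₀ μ₀).mulVec (eapState N M p q) c * eapState N M p q c) :=
    fun c => by ring
  rw [Finset.sum_congr rfl fun c _ => e3 c, ← Finset.mul_sum,
    Tv_zero N M hN p q X₀ μ₀ hne hfree₀, mul_zero]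

end Chain10

section Chain11
variable (N M : ℕ) [NeZero N]

lemma addRight_symm_eq (hN : N = 2*M) (j : ZMod N) :
    (Equiv.addRight (M : ZMod N)).symm j = j + (M : ZMod N) := by
  apply (Equiv.addRight (M : ZMod N)).injective
  rw [Equiv.apply_symm_apply]
  show j = j + (M : ZMod N) + (M : ZMod N)
  rw [addMM N M hN]

lemma count_eq (hN : N = 2*M) (X₀ : Finset (ZMod N)) (μ₀ : ZMod N → Fin 3) :
    (∑ μ : ZMod N → Fin 3,
        (if (∀ j ∈ X₀.image (· + (M : ZMod N)), μ j = μ₀ (j - (M : ZMod N)))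
          then (1 : ℂ) else 0))
      = ∑ μ : ZMod N → Fin 3, (if (∀ j ∈ X₀, μ j = μ₀ j) then (1 : ℂ) else 0) := by
  refine (Fintype.sum_equiv
    (Equiv.arrowCongr (Equiv.addRight (M : ZMod N)) (Equiv.refl (Fin 3))) _ _ fun μ => ?_).symm
  have hiff : (∀ j ∈ X₀.image (· + (M : ZMod N)),
      (Equiv.arrowCongr (Equiv.addRight (M : ZMod N)) (Equiv.refl (Fin 3))) μ j
        = μ₀ (j - (M : ZMod N))) ↔ (∀ j ∈ X₀, μ j = μ₀ j) := by
    simp only [Equiv.arrowCongr_apply, Equiv.coe_refl, Function.comp_apply, id_eq,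
      addRight_symm_eq N M hN]
    constructor
    · intro h j hj
      have hjm : j + (M : ZMod N) ∈ X₀.image (· + (M : ZMod N)) := by
        rw [mem_imageM N M hN, addMM N M hN]
        exact hj
      have h2 := h _ hjm
      rwa [addMM N M hN, subM N M hN, addMM N M hN] at h2
    · intro h j hj
      have hjm : j + (M : ZMod N) ∈ X₀ := (mem_imageM N M hN X₀ j).mp hj
      rw [subM N M hN]
      exact h _ hjm
  rw [if_congr hiff rfl rfl]

lemma count_ne_zero (X₀ : Finset (ZMod N)) (μ₀ : ZMod N → Fin 3) :
    (∑ μ : ZMod N → Fin 3, (if (∀ j ∈ X₀, μ j = μ₀ j) then (1 : ℂ) else 0)) ≠ 0 := by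
  rw [Finset.sum_boole]
  refine Nat.cast_ne_zero.mpr (Finset.card_ne_zero_of_mem
    (Finset.mem_filter.mpr ⟨Finset.mem_univ μ₀, fun j _ => rfl⟩))

end Chain11

section Chain12
variable (N M : ℕ) [NeZero N]

lemma sum_ite_pair (X₀ : Finset (ZMod N)) (P : (ZMod N → Fin 3) → Prop) [DecidablePred P]
    (C : ℂ) :
    (∑ X : Finset (ZMod N), ∑ μ : ZMod N → Fin 3, if X = X₀ ∧ P μ then C else 0)
      = C * ∑ μ : ZMod N → Fin 3, (if P μ then (1 : ℂ) else 0) := by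
  rw [Finset.sum_eq_single X₀ (fun X _ hX => by simp [hX])
    (fun h => absurd (Finset.mem_univ X₀) h)]
  simp only [true_and]
  rw [Finset.mul_sum]
  exact Finset.sum_congr rfl fun μ _ => by split_ifs <;> ring

lemma reverse_dir (hN : N = 2*M) (p q : ZMod N → Fin 2)
    (hp : ∀ j : ZMod N, p (j + (M : ZMod N)) = p j)
    (hq : ∀ j : ZMod N, q (j + (M : ZMod N)) = q j)
    (J : Finset (ZMod N) → (ZMod N → Fin 3) → ℝ)
    (hres : ∀ X (μ μ' : ZMod N → Fin 3), (∀ j ∈ X, μ j = μ' j) → J X μ = J X μ')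
    (hloc : ∀ X μ, N ≤ 4 * diam N X → J X μ = 0)
    (htr : ∀ μ, J ∅ μ = 0) (lam : ℂ)
    (heq : (ham N J).mulVec (eapState N M p q) = lam • eapState N M p q)
    (X₀ : Finset (ZMod N)) (μ₀ : ZMod N → Fin 3) :
    (J (X₀.image (· + (M : ZMod N))) (fun k => μ₀ (k - (M : ZMod N))) : ℂ)
      = -(J X₀ μ₀ : ℂ) * ∏ j ∈ X₀, omegaSign (p j) (q j) (μ₀ j) := by
  by_cases hemp : X₀ = ∅
  · subst hemp
    rw [Finset.image_empty, htr, htr]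
    push_cast
    ring
  by_cases hlocX : N ≤ 4 * diam N X₀
  · rw [hloc _ _ (by rwa [diam_image N M hN]), hloc _ μ₀ hlocX]
    push_cast
    ring
  push_neg at hlocX
  have hne : X₀.Nonempty := Finset.nonempty_iff_ne_empty.mpr hemp
  have hfree₀ : ∀ j ∈ X₀, j + (M : ZMod N) ∉ X₀ := inter_free N M hN X₀ hlocX
  have hmain := main_sum_zero N M hN p q J lam heq X₀ μ₀ hne hfree₀
  rw [Finset.sum_congr rfl fun X _ => Finset.sum_congr rfl fun μ _ =>
    term_classify N M hN p q hp hq J hres hloc X₀ μ₀ hne hlocX X μ] at hmain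
  rw [Finset.sum_congr rfl fun (X : Finset (ZMod N)) _ => Finset.sum_add_distrib,
    Finset.sum_add_distrib] at hmain
  rw [sum_ite_pair N X₀ _ _, sum_ite_pair N (X₀.image (· + (M : ZMod N))) _ _,
    count_eq N M hN X₀ μ₀] at hmain
  have hKne := count_ne_zero N X₀ μ₀
  have hEne : (∏ i : Fin M, epsFac N M X₀ μ₀ i) ≠ 0 :=
    Finset.prod_ne_zero_iff.mpr fun i _ => epsFac_ne_zero N M X₀ μ₀ i
  have hΩ : (∏ j ∈ X₀, omegaSign (p j) (q j) (μ₀ j))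
      * (∏ j ∈ X₀, omegaSign (p j) (q j) (μ₀ j)) = 1 := by
    rw [← Finset.prod_mul_distrib]
    rw [Finset.prod_congr rfl fun j _ => omega_mul_self (p j) (q j) (μ₀ j)]
    exact Finset.prod_const_one
  have hfac : (((J X₀ μ₀ : ℂ) * ∏ i : Fin M, epsFac N M X₀ μ₀ i)
      + ((J (X₀.image (· + (M : ZMod N))) (fun k => μ₀ (k - (M : ZMod N))) : ℂ)
        * ((∏ i : Fin M, epsFac N M X₀ μ₀ i)
          * ∏ j ∈ X₀, omegaSign (p j) (q j) (μ₀ j))))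
      * (∑ μ : ZMod N → Fin 3, (if (∀ j ∈ X₀, μ j = μ₀ j) then (1 : ℂ) else 0)) = 0 := by
    linear_combination hmain
  have hsum0 := (mul_eq_zero.mp hfac).resolve_right hKne
  have h5 : (J X₀ μ₀ : ℂ)
      + (J (X₀.image (· + (M : ZMod N))) (fun k => μ₀ (k - (M : ZMod N))) : ℂ)
        * ∏ j ∈ X₀, omegaSign (p j) (q j) (μ₀ j) = 0 := by
    have h6 : (∏ i : Fin M, epsFac N M X₀ μ₀ i) * ((J X₀ μ₀ : ℂ)
        + (J (X₀.image (· + (M : ZMod N))) (fun k => μ₀ (k - (M : ZMod N))) : ℂ)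
          * ∏ j ∈ X₀, omegaSign (p j) (q j) (μ₀ j)) = 0 := by
      linear_combination hsum0
    exact (mul_eq_zero.mp h6).resolve_left hEne
  linear_combination (∏ j ∈ X₀, omegaSign (p j) (q j) (μ₀ j)) * h5
    - (J (X₀.image (· + (M : ZMod N))) (fun k => μ₀ (k - (M : ZMod N))) : ℂ) * hΩ

end Chain12

end EAP

/-- Theorem 1: with the locality condition `J_X^μ = 0` for `D(X) ≥ N/4`, the EAP state is an
eigenvector of `H` iff `J_{X+N/2}^ν = -J_X^μ ∏_{j∈X} ω_j^{μ_j}` for all `X`, `μ`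
(with `ν_k = μ_{k-N/2}`). -/
theorem eap_eigenstate_iff (N M : ℕ) [NeZero N] (hN : N = 2 * M)
    (p q : ZMod N → Fin 2)
    (hp : ∀ j : ZMod N, p (j + (M : ZMod N)) = p j)
    (hq : ∀ j : ZMod N, q (j + (M : ZMod N)) = q j)
    (J : Finset (ZMod N) → (ZMod N → Fin 3) → ℝ)
    (hres : ∀ X (μ μ' : ZMod N → Fin 3), (∀ j ∈ X, μ j = μ' j) → J X μ = J X μ')
    (hloc : ∀ X μ, N ≤ 4 * diam N X → J X μ = 0)
    (htr : ∀ μ, J ∅ μ = 0) :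
    (∃ lam : ℂ, (ham N J).mulVec (eapState N M p q) = lam • eapState N M p q) ↔
      (∀ X (μ : ZMod N → Fin 3),
        (J (X.image (· + (M : ZMod N))) (fun k => μ (k - (M : ZMod N))) : ℂ) =
          -(J X μ : ℂ) * ∏ j ∈ X, omegaSign (p j) (q j) (μ j)) := by
  constructor
  · rintro ⟨lam, heq⟩ X μ
    exact EAP.reverse_dir N M hN p q hp hq J hres hloc htr lam heq X μ
  · intro hcond
    exact ⟨0, EAP.forward_dir N M hN p q hp hq J hloc htr hcond⟩
end
end

section
/- Suppose J_{X+N/2}^{ν} = -J_X^{μ} ∏_{j∈X} ω_j^{μ_j} holds for all X with D(X) < N/2 and all μ ∈ {x,y,z}^X (with ν the translate of μ by N/2), and J_X^μ = 0 for D(X) ≥ N/2. Then H |EAP⟩ = 0. -/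
open Matrix Finset
open scoped Kronecker

noncomputable section

/-! ### Auxiliary lemmas -/

lemma core_bell (a : Fin 3) (pp qq α β : Fin 2) :
    ∑ b, pauli a α b * bell pp qq (b, β)
      = omegaSign pp qq a * ∑ b, pauli a β b * bell pp qq (α, b) := by
  fin_cases a <;> fin_cases pp <;> fin_cases qq <;> fin_cases α <;> fin_cases β <;>
    simp [pauli, bell, omegaSign, σx, σy, σz, Fin.sum_univ_two, Prod.ext_iff] <;> ring

lemma omega_sq (pp qq : Fin 2) (a : Fin 3) :
    omegaSign pp qq a * omegaSign pp qq a = 1 := by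
  fin_cases a <;> fin_cases pp <;> fin_cases qq <;> norm_num [omegaSign]

lemma sum_update_left (N : ℕ) [NeZero N] (c : Cfg N) (j : ZMod N) (f : Cfg N → ℂ) :
    (∑ c' : Cfg N, if ∀ i, i ≠ j → c i = c' i then f c' else 0)
      = ∑ b : Fin 2, f (Function.update c j b) := by
  classical
  rw [← Finset.sum_filter]
  rw [show Finset.univ.filter (fun c' : Cfg N => ∀ i, i ≠ j → c i = c' i)
      = Finset.univ.image (fun b => Function.update c j b) from ?_]
  · rw [Finset.sum_image]
    intro b _ b' _ h
    have := congrFun h j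
    simpa using this
  · ext c'
    simp only [Finset.mem_filter, Finset.mem_univ, true_and, Finset.mem_image]
    constructor
    · intro h
      refine ⟨c' j, ?_⟩
      funext i
      by_cases hi : i = j
      · subst hi; simp
      · simp [Function.update_of_ne hi, h i hi]
    · rintro ⟨b, rfl⟩ i hi
      simp [Function.update_of_ne hi]

lemma sum_update_right (N : ℕ) [NeZero N] (c' : Cfg N) (j : ZMod N) (f : Cfg N → ℂ) :
    (∑ c : Cfg N, if ∀ i, i ≠ j → c i = c' i then f c else 0)
      = ∑ b : Fin 2, f (Function.update c' j b) := by
  classical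
  rw [← sum_update_left N c' j f]
  congr 1; funext c
  congr 1
  simp only [eq_iff_iff]
  constructor <;> intro h i hi <;> exact (h i hi).symm

lemma pauliAt_mulVec (N : ℕ) [NeZero N] (j : ZMod N) (A : Matrix (Fin 2) (Fin 2) ℂ)
    (v : Cfg N → ℂ) (c : Cfg N) :
    (pauliAt N j A).mulVec v c = ∑ b : Fin 2, A (c j) b * v (Function.update c j b) := by
  classical
  rw [mulVec, dotProduct]
  have h : ∀ c' : Cfg N, pauliAt N j A c c' * v c'
      = if ∀ i, i ≠ j → c i = c' i then A (c j) (c' j) * v c' else 0 := by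
    intro c'; simp only [pauliAt, Matrix.of_apply, ite_mul, zero_mul]
  rw [Finset.sum_congr rfl fun c' _ => h c', sum_update_left]
  refine Finset.sum_congr rfl fun b _ => ?_
  simp

lemma mergeL (N : ℕ) [NeZero N] (X : Finset (ZMod N)) (μ : ZMod N → Fin 3)
    (j : ZMod N) (hj : j ∉ X) :
    pauliAt N j (pauli (μ j)) * pauliString N X μ = pauliString N (insert j X) μ := by
  classical
  ext c c'
  rw [Matrix.mul_apply]
  have h1 : ∀ c'' : Cfg N, pauliAt N j (pauli (μ j)) c c'' * pauliString N X μ c'' c'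
      = if ∀ i, i ≠ j → c i = c'' i
          then pauli (μ j) (c j) (c'' j) * pauliString N X μ c'' c' else 0 := by
    intro c''; simp only [pauliAt, Matrix.of_apply, ite_mul, zero_mul]
  rw [Finset.sum_congr rfl fun c'' _ => h1 c'', sum_update_left]
  have h2 : ∀ b : Fin 2,
      pauli (μ j) (c j) (Function.update c j b j)
          * pauliString N X μ (Function.update c j b) c'
      = pauli (μ j) (c j) b * (∏ k ∈ X, pauli (μ k) (c k) (c' k))
          * ((if b = c' j then 1 else 0) *
             (if ∀ i, i ∉ X → i ≠ j → c i = c' i then (1:ℂ) else 0)) := by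
    intro b
    rw [Function.update_self]
    unfold pauliString
    rw [Matrix.of_apply]
    have hprod : (∏ k ∈ X, pauli (μ k) (Function.update c j b k) (c' k))
        = ∏ k ∈ X, pauli (μ k) (c k) (c' k) := by
      refine Finset.prod_congr rfl fun k hk => ?_
      have hkj : k ≠ j := fun h => hj (h ▸ hk)
      rw [Function.update_of_ne hkj]
    rw [hprod]
    have hiff : (∀ i, i ∉ X → Function.update c j b i = c' i)
        ↔ (b = c' j ∧ ∀ i, i ∉ X → i ≠ j → c i = c' i) := by
      constructor
      · intro h
        refine ⟨by simpa using h j hj, fun i hi hij => ?_⟩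
        have := h i hi; rwa [Function.update_of_ne hij] at this
      · rintro ⟨hb, h⟩ i hi
        by_cases hij : i = j
        · subst hij; simpa using hb
        · rw [Function.update_of_ne hij]; exact h i hi hij
    rw [if_congr hiff rfl rfl, ite_and]
    split <;> split <;> simp
  rw [Finset.sum_congr rfl fun b _ => h2 b]
  by_cases hQ : ∀ i, i ∉ X → i ≠ j → c i = c' i
  · simp only [if_pos hQ, mul_one]
    rw [Finset.sum_congr rfl (fun b _ => by rw [mul_ite, mul_one, mul_zero]),
      Finset.sum_ite_eq' Finset.univ (c' j)
        (fun b => pauli (μ j) (c j) b * ∏ k ∈ X, pauli (μ k) (c k) (c' k))]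
    rw [if_pos (Finset.mem_univ _)]
    unfold pauliString
    rw [Matrix.of_apply, Finset.prod_insert hj]
    have : (∀ i, i ∉ insert j X → c i = c' i) := by
      intro i hi
      simp only [Finset.mem_insert, not_or] at hi
      exact hQ i hi.2 hi.1
    rw [if_pos this]; ring
  · simp only [if_neg hQ, mul_zero]
    unfold pauliString
    rw [Matrix.of_apply]
    have : ¬ (∀ i, i ∉ insert j X → c i = c' i) := by
      intro h; exact hQ fun i hi hij => h i (by simp [Finset.mem_insert, hij, hi])
    rw [if_neg this, mul_zero, Finset.sum_const_zero]

lemma mergeR (N : ℕ) [NeZero N] (X : Finset (ZMod N)) (μ : ZMod N → Fin 3)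
    (j : ZMod N) (hj : j ∉ X) :
    pauliString N X μ * pauliAt N j (pauli (μ j)) = pauliString N (insert j X) μ := by
  classical
  ext c c'
  rw [Matrix.mul_apply]
  have h1 : ∀ c'' : Cfg N, pauliString N X μ c c'' * pauliAt N j (pauli (μ j)) c'' c'
      = if ∀ i, i ≠ j → c'' i = c' i
          then pauliString N X μ c c'' * pauli (μ j) (c'' j) (c' j) else 0 := by
    intro c''; simp only [pauliAt, Matrix.of_apply, mul_ite, mul_zero]
  rw [Finset.sum_congr rfl fun c'' _ => h1 c'', sum_update_right]
  have h2 : ∀ b : Fin 2,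
      pauliString N X μ c (Function.update c' j b)
          * pauli (μ j) (Function.update c' j b j) (c' j)
      = pauli (μ j) b (c' j) * (∏ k ∈ X, pauli (μ k) (c k) (c' k))
          * ((if b = c j then 1 else 0) *
             (if ∀ i, i ∉ X → i ≠ j → c i = c' i then (1:ℂ) else 0)) := by
    intro b
    rw [Function.update_self]
    unfold pauliString
    rw [Matrix.of_apply]
    have hprod : (∏ k ∈ X, pauli (μ k) (c k) (Function.update c' j b k))
        = ∏ k ∈ X, pauli (μ k) (c k) (c' k) := by
      refine Finset.prod_congr rfl fun k hk => ?_
      have hkj : k ≠ j := fun h => hj (h ▸ hk)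
      rw [Function.update_of_ne hkj]
    rw [hprod]
    have hiff : (∀ i, i ∉ X → c i = Function.update c' j b i)
        ↔ (b = c j ∧ ∀ i, i ∉ X → i ≠ j → c i = c' i) := by
      constructor
      · intro h
        refine ⟨by simpa using (h j hj).symm, fun i hi hij => ?_⟩
        have := h i hi; rwa [Function.update_of_ne hij] at this
      · rintro ⟨hb, h⟩ i hi
        by_cases hij : i = j
        · subst hij; simpa using hb.symm
        · rw [Function.update_of_ne hij]; exact h i hi hij
    rw [if_congr hiff rfl rfl, ite_and]
    split <;> split <;> simp <;> ring
  rw [Finset.sum_congr rfl fun b _ => h2 b]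
  by_cases hQ : ∀ i, i ∉ X → i ≠ j → c i = c' i
  · simp only [if_pos hQ, mul_one]
    rw [Finset.sum_congr rfl (fun b _ => by rw [mul_ite, mul_one, mul_zero]),
      Finset.sum_ite_eq' Finset.univ (c j)
        (fun b => pauli (μ j) b (c' j) * ∏ k ∈ X, pauli (μ k) (c k) (c' k))]
    rw [if_pos (Finset.mem_univ _)]
    unfold pauliString
    rw [Matrix.of_apply, Finset.prod_insert hj]
    have : (∀ i, i ∉ insert j X → c i = c' i) := by
      intro i hi
      simp only [Finset.mem_insert, not_or] at hi
      exact hQ i hi.2 hi.1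
    rw [if_pos this]; ring
  · simp only [if_neg hQ, mul_zero]
    unfold pauliString
    rw [Matrix.of_apply]
    have : ¬ (∀ i, i ∉ insert j X → c i = c' i) := by
      intro h; exact hQ fun i hi hij => h i (by simp [Finset.mem_insert, hij, hi])
    rw [if_neg this, mul_zero, Finset.sum_const_zero]

lemma pauliString_congr (N : ℕ) [NeZero N] (X : Finset (ZMod N)) (μ μ' : ZMod N → Fin 3)
    (h : ∀ k ∈ X, μ k = μ' k) : pauliString N X μ = pauliString N X μ' := by
  ext c c'
  unfold pauliString
  rw [Matrix.of_apply, Matrix.of_apply]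
  congr 1
  exact Finset.prod_congr rfl fun k hk => by rw [h k hk]

lemma pauliString_empty (N : ℕ) [NeZero N] (μ : ZMod N → Fin 3) :
    pauliString N ∅ μ = 1 := by
  ext c c'
  simp [pauliString, Matrix.one_apply, funext_iff, eq_comm]

lemma single_core (N M : ℕ) [NeZero N] (hN : N = 2 * M) (p q : ZMod N → Fin 2)
    (i : ℕ) (hi : i < M) (a : Fin 3) :
    (pauliAt N (i : ZMod N) (pauli a)).mulVec (eapState N M p q)
      = omegaSign (p (i : ZMod N)) (q (i : ZMod N)) a •
        (pauliAt N ((i : ZMod N) + (M : ZMod N)) (pauli a)).mulVec (eapState N M p q) := by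
  have hM : 0 < M := by
    rcases Nat.eq_zero_or_pos M with h | h
    · exact absurd (by omega : N = 0) (NeZero.ne N)
    · exact h
  have hinj : ∀ a b : ℕ, a < N → b < N → (a : ZMod N) = (b : ZMod N) → a = b := by
    intro a b ha hb h
    have := congrArg ZMod.val h
    rwa [ZMod.val_cast_of_lt ha, ZMod.val_cast_of_lt hb] at this
  set j : ZMod N := (i : ZMod N) with hj
  set j' : ZMod N := (i : ZMod N) + (M : ZMod N) with hj'
  have hcast : ∀ k : ℕ, (k : ZMod N) + (M : ZMod N) = ((k + M : ℕ) : ZMod N) := by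
    intro k; push_cast; ring
  have hj'cast : j' = ((i + M : ℕ) : ZMod N) := hcast i
  have hEji : j' ≠ j := by
    rw [hj'cast, hj]
    intro h; have := hinj _ _ (by omega) (by omega) h; omega
  have hA : ∀ k : ℕ, k < M → k ≠ i → (k : ZMod N) ≠ j := by
    intro k hk hki h; exact hki (hinj _ _ (by omega) (by omega) h)
  have hB : ∀ k : ℕ, k < M → (k : ZMod N) + (M : ZMod N) ≠ j := by
    intro k hk h; rw [hcast] at h
    have := hinj _ _ (by omega) (by omega) h; omega
  have hC : ∀ k : ℕ, k < M → (k : ZMod N) ≠ j' := by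
    intro k hk h; rw [hj'cast] at h
    have := hinj _ _ (by omega) (by omega) h; omega
  have hD : ∀ k : ℕ, k < M → k ≠ i → (k : ZMod N) + (M : ZMod N) ≠ j' := by
    intro k hk hki h; rw [hcast, hj'cast] at h
    have := hinj _ _ (by omega) (by omega) h; omega
  funext c
  rw [pauliAt_mulVec, Pi.smul_apply, pauliAt_mulVec]
  set R : ℂ := ∏ k ∈ (Finset.range M).erase i,
    bell (p (k : ZMod N)) (q (k : ZMod N)) (c (k : ZMod N), c ((k : ZMod N) + (M : ZMod N)))
    with hR
  have hv1 : ∀ b : Fin 2, eapState N M p q (Function.update c j b)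
      = bell (p j) (q j) (b, c j') * R := by
    intro b
    unfold eapState
    rw [← Finset.mul_prod_erase _ _ (Finset.mem_range.2 hi)]
    congr 1
    · rw [← hj, Function.update_self, Function.update_of_ne hEji]
    · refine Finset.prod_congr rfl fun k hk => ?_
      obtain ⟨hki, hkM⟩ := Finset.mem_erase.1 hk
      rw [Finset.mem_range] at hkM
      rw [Function.update_of_ne (hA k hkM hki), Function.update_of_ne (hB k hkM)]
  have hv2 : ∀ b : Fin 2, eapState N M p q (Function.update c j' b)
      = bell (p j) (q j) (c j, b) * R := by
    intro b
    unfold eapState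
    rw [← Finset.mul_prod_erase _ _ (Finset.mem_range.2 hi)]
    congr 1
    · rw [← hj, Function.update_of_ne hEji.symm, Function.update_self]
    · refine Finset.prod_congr rfl fun k hk => ?_
      obtain ⟨hki, hkM⟩ := Finset.mem_erase.1 hk
      rw [Finset.mem_range] at hkM
      rw [Function.update_of_ne (hC k hkM), Function.update_of_ne (hD k hkM hki)]
  calc ∑ b : Fin 2, pauli a (c j) b * eapState N M p q (Function.update c j b)
      = (∑ b : Fin 2, pauli a (c j) b * bell (p j) (q j) (b, c j')) * R := by
        rw [Finset.sum_mul]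
        exact Finset.sum_congr rfl fun b _ => by rw [hv1 b]; ring
    _ = (omegaSign (p j) (q j) a
          * ∑ b : Fin 2, pauli a (c j') b * bell (p j) (q j) (c j, b)) * R := by
        rw [core_bell]
    _ = omegaSign (p j) (q j) a •
          ∑ b : Fin 2, pauli a (c j') b * eapState N M p q (Function.update c j' b) := by
        rw [smul_eq_mul, Finset.mul_sum, Finset.sum_mul, Finset.mul_sum]
        exact Finset.sum_congr rfl fun b _ => by rw [hv2 b]; ring

lemma single_site (N M : ℕ) [NeZero N] (hN : N = 2 * M) (p q : ZMod N → Fin 2)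
    (hp : ∀ j : ZMod N, p (j + (M : ZMod N)) = p j)
    (hq : ∀ j : ZMod N, q (j + (M : ZMod N)) = q j)
    (j : ZMod N) (a : Fin 3) :
    (pauliAt N j (pauli a)).mulVec (eapState N M p q)
      = omegaSign (p j) (q j) a •
        (pauliAt N (j + (M : ZMod N)) (pauli a)).mulVec (eapState N M p q) := by
  have hM : 0 < M := by
    rcases Nat.eq_zero_or_pos M with h | h
    · exact absurd (by omega : N = 0) (NeZero.ne N)
    · exact h
  have hjval : ((j.val : ℕ) : ZMod N) = j := ZMod.natCast_rightInverse j
  have hvlt : j.val < N := ZMod.val_lt j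
  by_cases h : j.val < M
  · have := single_core N M hN p q j.val h a
    rwa [hjval] at this
  · set i : ℕ := j.val - M with hidef
    have hiM : i < M := by omega
    have hMM : (M : ZMod N) + (M : ZMod N) = 0 := by
      have h2 : ((M + M : ℕ) : ZMod N) = ((N : ℕ) : ZMod N) := by
        congr 1; omega
      rw [ZMod.natCast_self] at h2
      push_cast at h2
      exact h2
    have hji : (i : ZMod N) + (M : ZMod N) = j := by
      have : ((i + M : ℕ) : ZMod N) = j := by
        rw [show i + M = j.val by omega, hjval]
      rw [← this]; push_cast; ring
    have hjM : j + (M : ZMod N) = (i : ZMod N) := by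
      rw [← hji, add_assoc, hMM, add_zero]
    have hcore := single_core N M hN p q i hiM a
    rw [hjM, ← hji, hp, hq, hcore, smul_smul, omega_sq, one_smul]

lemma string_shift (N M : ℕ) [NeZero N] (hN : N = 2 * M) (p q : ZMod N → Fin 2)
    (hp : ∀ j : ZMod N, p (j + (M : ZMod N)) = p j)
    (hq : ∀ j : ZMod N, q (j + (M : ZMod N)) = q j)
    (X : Finset (ZMod N)) (μ : ZMod N → Fin 3)
    (hdisj : ∀ j ∈ X, j + (M : ZMod N) ∉ X) :
    (pauliString N X μ).mulVec (eapState N M p q)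
      = (∏ j ∈ X, omegaSign (p j) (q j) (μ j)) •
        (pauliString N (X.image (· + (M : ZMod N)))
          (fun k => μ (k - (M : ZMod N)))).mulVec (eapState N M p q) := by
  classical
  induction X using Finset.induction_on with
  | empty =>
    simp [pauliString_empty]
  | @insert j s hjs ih =>
    have hdisj' : ∀ k ∈ s, k + (M : ZMod N) ∉ s := fun k hk hk' =>
      hdisj k (Finset.mem_insert_of_mem hk) (Finset.mem_insert_of_mem hk')
    have hjM : j + (M : ZMod N) ∉ insert j s := hdisj j (Finset.mem_insert_self j s)
    set μ' : ZMod N → Fin 3 := fun k => μ (k - (M : ZMod N)) with hμ'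
    set s' : Finset (ZMod N) := s.image (· + (M : ZMod N)) with hs'
    have hjs' : j ∉ s' := by
      intro h
      obtain ⟨k, hk, hkj⟩ := Finset.mem_image.1 h
      exact hdisj k (Finset.mem_insert_of_mem hk) (hkj ▸ Finset.mem_insert_self j s)
    have hjMs' : j + (M : ZMod N) ∉ s' := by
      intro h
      obtain ⟨k, hk, hkj⟩ := Finset.mem_image.1 h
      have : k = j := by
        have := add_right_cancel hkj
        exact this
      exact hjs (this ▸ hk)
    have hμ'jM : μ' (j + (M : ZMod N)) = μ j := by
      simp [hμ']
    -- commutation of pauliAt j with pauliString s' μ'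
    have hcomm : pauliAt N j (pauli (μ j)) * pauliString N s' μ'
        = pauliString N s' μ' * pauliAt N j (pauli (μ j)) := by
      set μ'' : ZMod N → Fin 3 := Function.update μ' j (μ j) with hμ''
      have hss : pauliString N s' μ' = pauliString N s' μ'' := by
        refine pauliString_congr N s' _ _ fun k hk => ?_
        have hkj : k ≠ j := fun h => hjs' (h ▸ hk)
        rw [hμ'', Function.update_of_ne hkj]
      have hAj : pauli (μ j) = pauli (μ'' j) := by
        rw [hμ'', Function.update_self]
      rw [hss, hAj, mergeL N s' μ'' j hjs', mergeR N s' μ'' j hjs']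
    have hmr := mergeR N s' μ' (j + (M : ZMod N)) hjMs'
    rw [hμ'jM] at hmr
    have key : pauliAt N j (pauli (μ j)) *ᵥ (pauliString N s' μ' *ᵥ eapState N M p q)
        = omegaSign (p j) (q j) (μ j) •
          (pauliString N (insert (j + (M : ZMod N)) s') μ' *ᵥ eapState N M p q) := by
      rw [Matrix.mulVec_mulVec, hcomm, ← Matrix.mulVec_mulVec,
        single_site N M hN p q hp hq j (μ j), Matrix.mulVec_smul, Matrix.mulVec_mulVec, hmr]
    rw [show (insert j s).image (· + (M : ZMod N))
        = insert (j + (M : ZMod N)) s' from Finset.image_insert _ _ _]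
    rw [← mergeL N s μ j hjs, ← Matrix.mulVec_mulVec, ih hdisj', Matrix.mulVec_smul, key,
      smul_smul, Finset.prod_insert hjs, mul_comm]

lemma diam_image (N M : ℕ) [NeZero N] (X : Finset (ZMod N)) :
    diam N (X.image (· + (M : ZMod N))) = diam N X := by
  classical
  unfold diam
  rw [Finset.sup_image]
  refine Finset.sup_congr rfl fun a _ => ?_
  simp only [Function.comp_apply]
  rw [Finset.sup_image]
  refine Finset.sup_congr rfl fun b _ => ?_
  simp only [Function.comp_apply, add_sub_add_right_eq_sub]

lemma MM_zero (N M : ℕ) [NeZero N] (hN : N = 2 * M) :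
    (M : ZMod N) + (M : ZMod N) = 0 := by
  have h2 : ((M + M : ℕ) : ZMod N) = ((N : ℕ) : ZMod N) := by congr 1; omega
  rw [ZMod.natCast_self] at h2
  push_cast at h2
  exact h2

lemma disjoint_of_diam (N M : ℕ) [NeZero N] (hN : N = 2 * M) (X : Finset (ZMod N))
    (h : 2 * diam N X < N) : ∀ j ∈ X, j + (M : ZMod N) ∉ X := by
  intro j hj hj'
  have hM : 0 < M := by
    rcases Nat.eq_zero_or_pos M with h0 | h0
    · exact absurd (by omega : N = 0) (NeZero.ne N)
    · exact h0
  have hMval : ((M : ZMod N)).val = M := ZMod.val_cast_of_lt (by omega)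
  have hnegM : (-(M : ZMod N)) = (M : ZMod N) := by
    have := MM_zero N M hN
    linear_combination -this
  have h1 : min ((j + (M : ZMod N) - j).val) ((j - (j + (M : ZMod N))).val) ≤ diam N X := by
    refine le_trans ?_ (Finset.le_sup (f := fun a => X.sup fun b => min (a - b).val (b - a).val) hj')
    exact Finset.le_sup (f := fun b => min ((j + (M : ZMod N)) - b).val (b - (j + (M : ZMod N))).val) hj
  rw [show j + (M : ZMod N) - j = (M : ZMod N) by ring,
    show j - (j + (M : ZMod N)) = -(M : ZMod N) by ring, hnegM, hMval, min_self] at h1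
  omega

lemma sum_mulVec_aux {ι : Type*} (N : ℕ) [NeZero N] (s : Finset ι)
    (A : ι → Matrix (Cfg N) (Cfg N) ℂ) (v : Cfg N → ℂ) :
    (∑ i ∈ s, A i) *ᵥ v = ∑ i ∈ s, (A i) *ᵥ v := by
  classical
  induction s using Finset.cons_induction with
  | empty => simp [Matrix.zero_mulVec]
  | cons a s ha ih => rw [Finset.sum_cons, Finset.sum_cons, Matrix.add_mulVec, ih]

/-- With the relaxed locality condition `D(X) < N/2`, the antipodal sign relation
`J_{X+N/2}^ν = -J_X^μ ∏_{j∈X} ω_j^{μ_j}` implies `H|EAP⟩ = 0`. -/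
theorem eap_annihilated_of_sign_relation (N M : ℕ) [NeZero N] (hN : N = 2 * M)
    (p q : ZMod N → Fin 2)
    (hp : ∀ j : ZMod N, p (j + (M : ZMod N)) = p j)
    (hq : ∀ j : ZMod N, q (j + (M : ZMod N)) = q j)
    (J : Finset (ZMod N) → (ZMod N → Fin 3) → ℝ)
    (hloc : ∀ X μ, N ≤ 2 * diam N X → J X μ = 0)
    (htr : ∀ μ, J ∅ μ = 0)
    (hcond : ∀ X (μ : ZMod N → Fin 3), 2 * diam N X < N →
      (J (X.image (· + (M : ZMod N))) (fun k => μ (k - (M : ZMod N))) : ℂ) =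
        -(J X μ : ℂ) * ∏ j ∈ X, omegaSign (p j) (q j) (μ j)) :
    (ham N J).mulVec (eapState N M p q) = 0 := by
  classical
  set v : Cfg N → ℂ := eapState N M p q with hv
  have hMM := MM_zero N M hN
  unfold ham
  rw [sum_mulVec_aux]
  rw [Finset.sum_congr rfl fun X _ => sum_mulVec_aux N Finset.univ _ v]
  set F : Finset (ZMod N) × (ZMod N → Fin 3) → (Cfg N → ℂ) :=
    fun z => ((J z.1 z.2 : ℂ) • pauliString N z.1 z.2) *ᵥ v with hF
  have : ∑ X : Finset (ZMod N), ∑ μ : ZMod N → Fin 3,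
      ((J X μ : ℂ) • pauliString N X μ) *ᵥ v = ∑ z : Finset (ZMod N) × (ZMod N → Fin 3), F z := by
    rw [← Finset.univ_product_univ, Finset.sum_product]
  rw [this]
  set g : Finset (ZMod N) × (ZMod N → Fin 3) → Finset (ZMod N) × (ZMod N → Fin 3) :=
    fun z => (z.1.image (· + (M : ZMod N)), fun k => z.2 (k - (M : ZMod N))) with hg
  refine Finset.sum_ninvolution g ?_ ?_ (fun _ => Finset.mem_univ _) ?_
  · -- cancellation
    rintro ⟨X, μ⟩
    by_cases hd : 2 * diam N X < N
    · have hK := string_shift N M hN p q hp hq X μ (disjoint_of_diam N M hN X hd)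
      have hc := hcond X μ hd
      simp only [hF, hg, Matrix.smul_mulVec]
      rw [← hv] at hK
      rw [hK, smul_smul, hc, ← add_smul]
      convert zero_smul ℂ _
      ring
    · have h1 : J X μ = 0 := hloc X μ (by omega)
      have h2 : J (X.image (· + (M : ZMod N))) (fun k => μ (k - (M : ZMod N))) = 0 :=
        hloc _ _ (by rw [diam_image]; omega)
      simp only [hF, hg, h1, h2, Complex.ofReal_zero, zero_smul, Matrix.zero_mulVec, add_zero]
  · -- no fixed points where nonzero
    rintro ⟨X, μ⟩ hFne hgz
    have hJ : J X μ ≠ 0 := by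
      intro h0; exact hFne (by simp [hF, h0])
    have hXne : X ≠ ∅ := by
      intro h0; exact hJ (h0 ▸ htr μ)
    have hd : 2 * diam N X < N := by
      by_contra h
      exact hJ (hloc X μ (by omega))
    obtain ⟨j, hj⟩ := Finset.nonempty_of_ne_empty hXne
    have hX : X.image (· + (M : ZMod N)) = X := congrArg Prod.fst hgz
    have : j + (M : ZMod N) ∈ X := by
      rw [← hX]; exact Finset.mem_image_of_mem _ hj
    exact disjoint_of_diam N M hN X hd j hj this
  · -- involution
    rintro ⟨X, μ⟩
    simp only [hg, Prod.mk.injEq]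
    constructor
    · rw [Finset.image_image]
      have hcomp : ((· + (M : ZMod N)) ∘ (· + (M : ZMod N))) = id := by
        funext x
        simp [add_assoc, hMM]
      rw [hcomp, Finset.image_id]
    · funext k
      rw [sub_sub, hMM, sub_zero]
end
end

section
/- Let N be even with N ≥ 8 and let |1;00⟩ = ⊗_{j=1}^{N/2} |Φ_{00}⟩_{j,j+N/2} be the translation-invariant EAP state. Then for arbitrary real parameters J^{xy}, J^{yx}, J^{yz}, J^{zy}, h^y, the Hamiltonian H₁ = Σ_{j=1}^{N} (J^{xy} σ_j^x σ_{j+1}^y + J^{yx} σ_j^y σ_{j+1}^x + J^{yz} σ_j^y σ_{j+1}^z + J^{zy} σ_j^z σ_{j+1}^y + h^y σ_j^y) satisfies H₁ |1;00⟩ = 0. -/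
open Matrix Finset
open scoped Kronecker

noncomputable section

set_option linter.unusedSectionVars false
set_option maxHeartbeats 1000000

namespace Model1Aux

def yval (a : Fin 2) : ℂ := if a = 0 then -Complex.I else Complex.I
def zval (a : Fin 2) : ℂ := if a = 0 then 1 else -1

lemma σx_diag (a : Fin 2) : σx a a = 0 := by fin_cases a <;> simp [σx]
lemma σx_off (a : Fin 2) : σx a (a + 1) = 1 := by fin_cases a <;> simp [σx]
lemma σy_diag (a : Fin 2) : σy a a = 0 := by fin_cases a <;> simp [σy]
lemma σy_off (a : Fin 2) : σy a (a + 1) = yval a := by fin_cases a <;> simp [σy, yval]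
lemma σz_diag (a : Fin 2) : σz a a = zval a := by fin_cases a <;> simp [σz, zval]
lemma σz_off (a : Fin 2) : σz a (a + 1) = 0 := by fin_cases a <;> simp [σz]
lemma yval_flip (a : Fin 2) : yval (a + 1) = -yval a := by fin_cases a <;> simp [yval]
lemma fin2_aa (a : Fin 2) : a + 1 + 1 = a := by fin_cases a <;> rfl
lemma fin2_ne (a : Fin 2) : a ≠ a + 1 := by fin_cases a <;> decide

variable {N : ℕ} [NeZero N]

/-- Flip the spin at site `j`. -/
def fl (j : ZMod N) (c : Cfg N) : Cfg N := Function.update c j (c j + 1)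

lemma fl_apply (j i : ZMod N) (c : Cfg N) : fl j c i = if i = j then c j + 1 else c i :=
  Function.update_apply c j (c j + 1) i

lemma fl_comm (j j' : ZMod N) (h : j ≠ j') (c : Cfg N) : fl j (fl j' c) = fl j' (fl j c) := by
  funext i
  simp only [fl_apply]
  rw [if_neg h, if_neg (Ne.symm h)]
  by_cases h1 : i = j <;> by_cases h2 : i = j' <;> simp_all

lemma pauliAt_mulVec (j : ZMod N) (A : Matrix (Fin 2) (Fin 2) ℂ) (φ : Cfg N → ℂ) (c : Cfg N) :
    (pauliAt N j A).mulVec φ c = A (c j) (c j) * φ c + A (c j) (c j + 1) * φ (fl j c) := by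
  classical
  have hne : c ≠ fl j c := by
    intro h
    have := congrFun h j
    rw [fl_apply, if_pos rfl] at this
    exact fin2_ne (c j) this
  have hz : ∀ c' : Cfg N, c' ≠ c → c' ≠ fl j c → pauliAt N j A c c' * φ c' = 0 := by
    intro c' h1 h2
    have hcond : ¬ (∀ i, i ≠ j → c i = c' i) := by
      intro hc
      rcases (by decide : ∀ a b : Fin 2, b = a ∨ b = a + 1) (c j) (c' j) with h | h
      · apply h1
        funext i
        by_cases hi : i = j
        · rw [hi, h]
        · exact (hc i hi).symm
      · apply h2
        funext i
        rw [fl_apply]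
        by_cases hi : i = j
        · rw [if_pos hi, hi, h]
        · rw [if_neg hi]; exact (hc i hi).symm
    simp [pauliAt, hcond]
  have h1 : pauliAt N j A c c = A (c j) (c j) := by
    simp [pauliAt]
  have h2 : pauliAt N j A c (fl j c) = A (c j) (c j + 1) := by
    have hcond : ∀ i, i ≠ j → c i = fl j c i := by
      intro i hi; rw [fl_apply, if_neg hi]
    have hv : fl j c j = c j + 1 := by rw [fl_apply, if_pos rfl]
    show (if ∀ i, i ≠ j → c i = fl j c i then A (c j) (fl j c j) else 0) = _
    rw [if_pos hcond, hv]
  calc (pauliAt N j A).mulVec φ c = ∑ c', pauliAt N j A c c' * φ c' := rfl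
    _ = pauliAt N j A c c * φ c + pauliAt N j A c (fl j c) * φ (fl j c) :=
        Fintype.sum_eq_add c (fl j c) hne (fun c' hc' => hz c' hc'.1 hc'.2)
    _ = _ := by rw [h1, h2]

lemma two_site_mulVec (j j' : ZMod N) (hjj' : j ≠ j')
    (A B : Matrix (Fin 2) (Fin 2) ℂ) (ψ : Cfg N → ℂ) (c : Cfg N) :
    (pauliAt N j A * pauliAt N j' B).mulVec ψ c
      = A (c j) (c j) * (B (c j') (c j') * ψ c + B (c j') (c j' + 1) * ψ (fl j' c))
        + A (c j) (c j + 1) *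
          (B (c j') (c j') * ψ (fl j c) + B (c j') (c j' + 1) * ψ (fl j' (fl j c))) := by
  rw [← Matrix.mulVec_mulVec, pauliAt_mulVec, pauliAt_mulVec, pauliAt_mulVec]
  have h1 : fl j c j' = c j' := by rw [fl_apply, if_neg (Ne.symm hjj')]
  rw [h1]


lemma bell00 (a b : Fin 2) :
    bell 0 0 (a, b) = (if a = b then (1:ℂ) else 0) * ((Real.sqrt 2 : ℂ))⁻¹ := by
  fin_cases a <;> fin_cases b <;> simp [bell, div_eq_mul_inv] <;> norm_num

lemma natCast_ne_natCast {a b : ℕ} (ha : a < N) (hb : b < N) (hab : a ≠ b) :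
    (a : ZMod N) ≠ (b : ZMod N) := by
  intro h
  have := (ZMod.natCast_eq_natCast_iff a b N).mp h
  unfold Nat.ModEq at this
  rw [Nat.mod_eq_of_lt ha, Nat.mod_eq_of_lt hb] at this
  exact hab this

lemma eapState_apply {M : ℕ} (hN : N = 2 * M) (c : Cfg N) :
    eapState N M (fun _ => 0) (fun _ => 0) c
      = if (∀ i : ZMod N, c (i + (M : ZMod N)) = c i) then ((Real.sqrt 2 : ℂ))⁻¹ ^ M else 0 := by
  have hNpos : 0 < N := Nat.pos_of_ne_zero (NeZero.ne N)
  have hMpos : 0 < M := by omega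
  have h2M : (M : ZMod N) + (M : ZMod N) = 0 := by
    have h : ((2 * M : ℕ) : ZMod N) = 0 := by rw [← hN]; exact ZMod.natCast_self N
    push_cast at h
    linear_combination h
  show (∏ k ∈ Finset.range M, bell 0 0 (c (k : ZMod N), c ((k : ZMod N) + (M : ZMod N)))) = _
  simp only [bell00]
  rw [Finset.prod_mul_distrib, Finset.prod_const, Finset.prod_boole, Finset.card_range]
  have hiff : (∀ k ∈ Finset.range M, c (k : ZMod N) = c ((k : ZMod N) + (M : ZMod N)))
      ↔ (∀ i : ZMod N, c (i + (M : ZMod N)) = c i) := by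
    constructor
    · intro H i
      have hvi : ((i.val : ℕ) : ZMod N) = i := ZMod.natCast_rightInverse i
      by_cases hv : i.val < M
      · have := H i.val (Finset.mem_range.mpr hv)
        rw [hvi] at this
        exact this.symm
      · have hvN : i.val < N := ZMod.val_lt i
        have hk : i.val - M < M := by omega
        have hH := H (i.val - M) (Finset.mem_range.mpr hk)
        have e1 : ((i.val - M : ℕ) : ZMod N) + (M : ZMod N) = i := by
          have hle : M ≤ i.val := le_of_not_gt hv
          rw [Nat.cast_sub hle, hvi]
          ring
        have e2 : i + (M : ZMod N) = ((i.val - M : ℕ) : ZMod N) := by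
          conv_lhs => rw [← e1]
          rw [add_assoc, h2M, add_zero]
        rw [e2, hH, e1]
    · intro H k _
      exact (H (k : ZMod N)).symm
  rw [if_congr hiff rfl rfl, ite_mul, one_mul, zero_mul]

/-- periodicity predicate -/
def Qp (M : ℕ) (c : Cfg N) : Prop := ∀ i : ZMod N, c (i + (M : ZMod N)) = c i

lemma Q_flip_val {M : ℕ} (j : ZMod N) (hjMj : j + (M : ZMod N) ≠ j) (c : Cfg N)
    (h : Qp M (fl j c)) : c (j + (M : ZMod N)) = c j + 1 := by
  have := h j
  rw [fl_apply, fl_apply, if_neg hjMj, if_pos rfl] at this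
  exact this

lemma Q_flip_other {M : ℕ} (j i : ZMod N) (hi1 : i ≠ j) (hi2 : i + (M : ZMod N) ≠ j) (c : Cfg N)
    (h : Qp M (fl j c)) : c (i + (M : ZMod N)) = c i := by
  have := h i
  rw [fl_apply, fl_apply, if_neg hi2, if_neg hi1] at this
  exact this

lemma Q_flip {M : ℕ} (hM0 : (M : ZMod N) ≠ 0) (h2M : (M : ZMod N) + (M : ZMod N) = 0)
    (j : ZMod N) (c : Cfg N) (h : Qp M (fl j c)) : Qp M (fl (j + (M : ZMod N)) c) := by
  have hjMj : j + (M : ZMod N) ≠ j := fun hh => hM0 (by linear_combination hh)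
  have heq : j + (M : ZMod N) + (M : ZMod N) = j := by rw [add_assoc, h2M, add_zero]
  have hvv : c (j + (M : ZMod N)) = c j + 1 := Q_flip_val j hjMj c h
  intro i
  rw [fl_apply, fl_apply]
  by_cases hij : i = j
  · have c1 : i + (M : ZMod N) = j + (M : ZMod N) := by rw [hij]
    have c2 : ¬ (i = j + (M : ZMod N)) := by
      rw [hij]; exact Ne.symm hjMj
    rw [if_pos c1, if_neg c2, hij, hvv, fin2_aa]
  · by_cases hij' : i = j + (M : ZMod N)
    · have c1 : ¬ (i + (M : ZMod N) = j + (M : ZMod N)) := fun hh => hij (by linear_combination hh)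
      have c3 : i + (M : ZMod N) = j := by rw [hij']; exact heq
      rw [if_neg c1, if_pos hij', c3, hvv, fin2_aa]
    · have c1 : ¬ (i + (M : ZMod N) = j + (M : ZMod N)) := fun hh => hij (by linear_combination hh)
      have c2 : ¬ (i + (M : ZMod N) = j) := fun hh => hij' (by linear_combination hh - heq)
      rw [if_neg c1, if_neg hij']
      have := h i
      rw [fl_apply, fl_apply, if_neg c2, if_neg hij] at this
      exact this

lemma Q_flip2 {M : ℕ} (hM0 : (M : ZMod N) ≠ 0) (h2M : (M : ZMod N) + (M : ZMod N) = 0)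
    (j j' : ZMod N) (h0 : j ≠ j') (h1 : j' + (M : ZMod N) ≠ j) (c : Cfg N)
    (h : Qp M (fl j' (fl j c))) :
    Qp M (fl (j' + (M : ZMod N)) (fl (j + (M : ZMod N)) c)) := by
  have ha := Q_flip hM0 h2M j' (fl j c) h
  rw [fl_comm (j' + (M : ZMod N)) j h1 c] at ha
  have hb := Q_flip hM0 h2M j (fl (j' + (M : ZMod N)) c) ha
  rw [fl_comm (j + (M : ZMod N)) (j' + (M : ZMod N)) (fun hh => h0 (by linear_combination hh)) c] at hb
  exact hb

lemma Q_flip2_val {M : ℕ} (j j' : ZMod N) (h0 : j ≠ j') (h2 : j + (M : ZMod N) ≠ j')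
    (h3 : j + (M : ZMod N) ≠ j) (c : Cfg N) (h : Qp M (fl j' (fl j c))) :
    c (j + (M : ZMod N)) = c j + 1 := by
  have := h j
  simp only [fl_apply, if_neg h2, if_neg h3, if_neg h0, eq_self_iff_true, if_true] at this
  exact this

lemma Q_flip2_val' {M : ℕ} (j j' : ZMod N) (h0 : j' ≠ j) (h1 : j' + (M : ZMod N) ≠ j)
    (h4 : j' + (M : ZMod N) ≠ j') (c : Cfg N) (h : Qp M (fl j' (fl j c))) :
    c (j' + (M : ZMod N)) = c j' + 1 := by
  have := h j'
  simp only [fl_apply, if_neg h4, if_neg h1, if_neg h0, eq_self_iff_true, if_true] at this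
  exact this

lemma sum_pair_cancel (M' : ZMod N) (f : ZMod N → ℂ)
    (h : ∀ j, f j + f (j + M') = 0) : ∑ j : ZMod N, f j = 0 := by
  have h1 : ∑ j : ZMod N, f (j + M') = ∑ j : ZMod N, f j :=
    Fintype.sum_equiv (Equiv.addRight M') _ _ (fun j => rfl)
  have h2 : (∑ j : ZMod N, f j) + (∑ j : ZMod N, f j) = 0 := by
    nth_rewrite 2 [← h1]
    rw [← Finset.sum_add_distrib]
    exact Finset.sum_eq_zero fun j _ => h j
  linear_combination h2 / 2


lemma sum_mulVec_apply {n ι : Type*} [Fintype n] [Fintype ι]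
    (A : ι → Matrix n n ℂ) (v : n → ℂ) (c : n) :
    ((∑ i, A i).mulVec v) c = ∑ i, ((A i).mulVec v) c := by
  simp only [Matrix.mulVec, dotProduct, Matrix.sum_apply, Finset.sum_mul]
  exact Finset.sum_comm

end Model1Aux

/-- Model 1: the translation-invariant EAP state `|1;00⟩` is a zero-energy eigenstate of
`H₁ = Σ_j (J^{xy} σ_j^x σ_{j+1}^y + J^{yx} σ_j^y σ_{j+1}^x + J^{yz} σ_j^y σ_{j+1}^z
+ J^{zy} σ_j^z σ_{j+1}^y + h^y σ_j^y)`. -/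
theorem model1_eap_eigenstate (N M : ℕ) [NeZero N] (hN : N = 2 * M) (h8 : 8 ≤ N)
    (Jxy Jyx Jyz Jzy hy : ℝ) :
    (∑ j : ZMod N,
        ((Jxy : ℂ) • (pauliAt N j σx * pauliAt N (j + 1) σy) +
          (Jyx : ℂ) • (pauliAt N j σy * pauliAt N (j + 1) σx) +
          (Jyz : ℂ) • (pauliAt N j σy * pauliAt N (j + 1) σz) +
          (Jzy : ℂ) • (pauliAt N j σz * pauliAt N (j + 1) σy) +
          (hy : ℂ) • pauliAt N j σy)).mulVec
      (eapState N M (fun _ => 0) (fun _ => 0)) = 0 := by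
  classical
  have hMpos : 0 < M := by omega
  have hMlt : M < N := by omega
  have h2M : (M : ZMod N) + (M : ZMod N) = 0 := by
    have h : ((2 * M : ℕ) : ZMod N) = 0 := by rw [← hN]; exact ZMod.natCast_self N
    push_cast at h
    linear_combination h
  have heM : ∀ x : ZMod N, x + (M : ZMod N) + (M : ZMod N) = x := fun x => by
    rw [add_assoc, h2M, add_zero]
  have hM0 : (M : ZMod N) ≠ 0 := by
    have := Model1Aux.natCast_ne_natCast (N := N) hMlt (by omega : 0 < N) (by omega : M ≠ 0)
    simpa using this
  have hM1 : (M : ZMod N) ≠ 1 := by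
    have := Model1Aux.natCast_ne_natCast (N := N) hMlt (by omega : 1 < N) (by omega : M ≠ 1)
    simpa using this
  have hM1' : (M : ZMod N) + 1 ≠ 0 := by
    have := Model1Aux.natCast_ne_natCast (N := N) (by omega : M + 1 < N) (by omega : 0 < N)
      (by omega : M + 1 ≠ 0)
    push_cast at this
    simpa using this
  have h10 : (1 : ZMod N) ≠ 0 := by
    have := Model1Aux.natCast_ne_natCast (N := N) (by omega : 1 < N) (by omega : 0 < N)
      (by omega : (1 : ℕ) ≠ 0)
    simpa using this
  set r : ℂ := ((Real.sqrt 2 : ℂ))⁻¹ ^ M with hr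
  set ψ : Cfg N → ℂ := eapState N M (fun _ => 0) (fun _ => 0) with hψdef
  have hψ : ∀ c : Cfg N, ψ c = if (∀ i : ZMod N, c (i + (M : ZMod N)) = c i) then r else 0 :=
    fun c => Model1Aux.eapState_apply hN c
  funext c
  rw [Model1Aux.sum_mulVec_apply]
  simp only [Matrix.add_mulVec, Matrix.smul_mulVec, Pi.add_apply, Pi.smul_apply,
    smul_eq_mul, Pi.zero_apply]
  apply Model1Aux.sum_pair_cancel (M : ZMod N)
  intro j
  have hj1 : ∀ x : ZMod N, x ≠ x + 1 := fun x hh => h10 (by linear_combination -hh)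
  have hd1 : j ≠ j + 1 := hj1 j
  have hd2 : (j + 1) + (M : ZMod N) ≠ j := fun hh => hM1' (by linear_combination hh)
  have hd3 : j + (M : ZMod N) ≠ j := fun hh => hM0 (by linear_combination hh)
  have hd4 : (j + 1) + (M : ZMod N) ≠ j + 1 := fun hh => hM0 (by linear_combination hh)
  have hd5 : j + (M : ZMod N) ≠ j + 1 := fun hh => hM1 (by linear_combination hh)
  have hd6 : j + (M : ZMod N) ≠ (j + 1) + (M : ZMod N) := fun hh => h10 (by linear_combination -hh)
  have hd7 : j + 1 ≠ j + (M : ZMod N) := fun hh => hM1 (by linear_combination -hh)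
  have hd8 : ((j + 1) + (M : ZMod N)) + (M : ZMod N) ≠ j + (M : ZMod N) := by
    rw [heM (j + 1)]; exact hd7
  have e1 : j + (M : ZMod N) + 1 = (j + 1) + (M : ZMod N) := by ring
  rw [e1]
  have t1 : (pauliAt N j σx * pauliAt N (j + 1) σy).mulVec ψ c
      + (pauliAt N (j + (M : ZMod N)) σx * pauliAt N ((j + 1) + (M : ZMod N)) σy).mulVec ψ c
        = 0 := by
    rw [Model1Aux.two_site_mulVec j (j + 1) hd1 σx σy ψ c,
      Model1Aux.two_site_mulVec (j + (M : ZMod N)) ((j + 1) + (M : ZMod N)) hd6 σx σy ψ c]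
    simp only [Model1Aux.σx_diag, Model1Aux.σx_off, Model1Aux.σy_diag, Model1Aux.σy_off,
      zero_mul, mul_zero, zero_add, add_zero, one_mul]
    simp only [hψ]
    by_cases hQ : ∀ i : ZMod N, (Model1Aux.fl (j + 1) (Model1Aux.fl j c)) (i + (M : ZMod N))
        = (Model1Aux.fl (j + 1) (Model1Aux.fl j c)) i
    · have hQ' := Model1Aux.Q_flip2 hM0 h2M j (j + 1) hd1 hd2 c hQ
      unfold Model1Aux.Qp at hQ'
      have hv := Model1Aux.Q_flip2_val' j (j + 1) (Ne.symm hd1) hd2 hd4 c hQ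
      rw [if_pos hQ, if_pos hQ', hv, Model1Aux.yval_flip]
      ring
    · have hQ2 : ¬ (∀ i : ZMod N,
          (Model1Aux.fl ((j + 1) + (M : ZMod N)) (Model1Aux.fl (j + (M : ZMod N)) c))
              (i + (M : ZMod N))
            = (Model1Aux.fl ((j + 1) + (M : ZMod N)) (Model1Aux.fl (j + (M : ZMod N)) c)) i) := by
        intro hq
        apply hQ
        have := Model1Aux.Q_flip2 hM0 h2M (j + (M : ZMod N)) ((j + 1) + (M : ZMod N)) hd6 hd8 c hq
        rw [heM j, heM (j + 1)] at this
        exact this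
      rw [if_neg hQ, if_neg hQ2]
      ring
  have t2 : (pauliAt N j σy * pauliAt N (j + 1) σx).mulVec ψ c
      + (pauliAt N (j + (M : ZMod N)) σy * pauliAt N ((j + 1) + (M : ZMod N)) σx).mulVec ψ c
        = 0 := by
    rw [Model1Aux.two_site_mulVec j (j + 1) hd1 σy σx ψ c,
      Model1Aux.two_site_mulVec (j + (M : ZMod N)) ((j + 1) + (M : ZMod N)) hd6 σy σx ψ c]
    simp only [Model1Aux.σx_diag, Model1Aux.σx_off, Model1Aux.σy_diag, Model1Aux.σy_off,
      zero_mul, mul_zero, zero_add, add_zero, one_mul, mul_one]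
    simp only [hψ]
    by_cases hQ : ∀ i : ZMod N, (Model1Aux.fl (j + 1) (Model1Aux.fl j c)) (i + (M : ZMod N))
        = (Model1Aux.fl (j + 1) (Model1Aux.fl j c)) i
    · have hQ' := Model1Aux.Q_flip2 hM0 h2M j (j + 1) hd1 hd2 c hQ
      unfold Model1Aux.Qp at hQ'
      have hv := Model1Aux.Q_flip2_val j (j + 1) hd1 hd5 hd3 c hQ
      rw [if_pos hQ, if_pos hQ', hv, Model1Aux.yval_flip]
      ring
    · have hQ2 : ¬ (∀ i : ZMod N,
          (Model1Aux.fl ((j + 1) + (M : ZMod N)) (Model1Aux.fl (j + (M : ZMod N)) c))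
              (i + (M : ZMod N))
            = (Model1Aux.fl ((j + 1) + (M : ZMod N)) (Model1Aux.fl (j + (M : ZMod N)) c)) i) := by
        intro hq
        apply hQ
        have := Model1Aux.Q_flip2 hM0 h2M (j + (M : ZMod N)) ((j + 1) + (M : ZMod N)) hd6 hd8 c hq
        rw [heM j, heM (j + 1)] at this
        exact this
      rw [if_neg hQ, if_neg hQ2]
      ring
  have t3 : (pauliAt N j σy * pauliAt N (j + 1) σz).mulVec ψ c
      + (pauliAt N (j + (M : ZMod N)) σy * pauliAt N ((j + 1) + (M : ZMod N)) σz).mulVec ψ c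
        = 0 := by
    rw [Model1Aux.two_site_mulVec j (j + 1) hd1 σy σz ψ c,
      Model1Aux.two_site_mulVec (j + (M : ZMod N)) ((j + 1) + (M : ZMod N)) hd6 σy σz ψ c]
    simp only [Model1Aux.σy_diag, Model1Aux.σy_off, Model1Aux.σz_diag, Model1Aux.σz_off,
      zero_mul, mul_zero, zero_add, add_zero, one_mul]
    simp only [hψ]
    by_cases hQ : ∀ i : ZMod N, (Model1Aux.fl j c) (i + (M : ZMod N)) = (Model1Aux.fl j c) i
    · have hQ' := Model1Aux.Q_flip hM0 h2M j c hQ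
      unfold Model1Aux.Qp at hQ'
      have hv1 := Model1Aux.Q_flip_val j hd3 c hQ
      have hv2 := Model1Aux.Q_flip_other j (j + 1) (Ne.symm hd1) hd2 c hQ
      rw [if_pos hQ, if_pos hQ', hv1, hv2, Model1Aux.yval_flip]
      ring
    · have hQ2 : ¬ (∀ i : ZMod N, (Model1Aux.fl (j + (M : ZMod N)) c) (i + (M : ZMod N))
          = (Model1Aux.fl (j + (M : ZMod N)) c) i) := by
        intro hq
        apply hQ
        have := Model1Aux.Q_flip hM0 h2M (j + (M : ZMod N)) c hq
        rw [heM j] at this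
        exact this
      rw [if_neg hQ, if_neg hQ2]
      ring
  have t4 : (pauliAt N j σz * pauliAt N (j + 1) σy).mulVec ψ c
      + (pauliAt N (j + (M : ZMod N)) σz * pauliAt N ((j + 1) + (M : ZMod N)) σy).mulVec ψ c
        = 0 := by
    rw [Model1Aux.two_site_mulVec j (j + 1) hd1 σz σy ψ c,
      Model1Aux.two_site_mulVec (j + (M : ZMod N)) ((j + 1) + (M : ZMod N)) hd6 σz σy ψ c]
    simp only [Model1Aux.σy_diag, Model1Aux.σy_off, Model1Aux.σz_diag, Model1Aux.σz_off,
      zero_mul, mul_zero, zero_add, add_zero, one_mul]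
    simp only [hψ]
    by_cases hQ : ∀ i : ZMod N, (Model1Aux.fl (j + 1) c) (i + (M : ZMod N))
        = (Model1Aux.fl (j + 1) c) i
    · have hQ' := Model1Aux.Q_flip hM0 h2M (j + 1) c hQ
      unfold Model1Aux.Qp at hQ'
      have hv1 := Model1Aux.Q_flip_val (j + 1) hd4 c hQ
      have hv2 := Model1Aux.Q_flip_other (j + 1) j hd1 hd5 c hQ
      rw [if_pos hQ, if_pos hQ', hv1, hv2, Model1Aux.yval_flip]
      ring
    · have hQ2 : ¬ (∀ i : ZMod N, (Model1Aux.fl ((j + 1) + (M : ZMod N)) c) (i + (M : ZMod N))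
          = (Model1Aux.fl ((j + 1) + (M : ZMod N)) c) i) := by
        intro hq
        apply hQ
        have := Model1Aux.Q_flip hM0 h2M ((j + 1) + (M : ZMod N)) c hq
        rw [heM (j + 1)] at this
        exact this
      rw [if_neg hQ, if_neg hQ2]
      ring
  have t5 : (pauliAt N j σy).mulVec ψ c + (pauliAt N (j + (M : ZMod N)) σy).mulVec ψ c = 0 := by
    rw [Model1Aux.pauliAt_mulVec j σy ψ c, Model1Aux.pauliAt_mulVec (j + (M : ZMod N)) σy ψ c]
    simp only [Model1Aux.σy_diag, Model1Aux.σy_off, zero_mul, zero_add]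
    simp only [hψ]
    by_cases hQ : ∀ i : ZMod N, (Model1Aux.fl j c) (i + (M : ZMod N)) = (Model1Aux.fl j c) i
    · have hQ' := Model1Aux.Q_flip hM0 h2M j c hQ
      unfold Model1Aux.Qp at hQ'
      have hv := Model1Aux.Q_flip_val j hd3 c hQ
      rw [if_pos hQ, if_pos hQ', hv, Model1Aux.yval_flip]
      ring
    · have hQ2 : ¬ (∀ i : ZMod N, (Model1Aux.fl (j + (M : ZMod N)) c) (i + (M : ZMod N))
          = (Model1Aux.fl (j + (M : ZMod N)) c) i) := by
        intro hq
        apply hQ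
        have := Model1Aux.Q_flip hM0 h2M (j + (M : ZMod N)) c hq
        rw [heM j] at this
        exact this
      rw [if_neg hQ, if_neg hQ2]
      ring
  linear_combination (Jxy : ℂ) * t1 + (Jyx : ℂ) * t2 + (Jyz : ℂ) * t3 + (Jzy : ℂ) * t4
    + (hy : ℂ) * t5
end
end

section
/- Let N be even with N/2 a multiple of 3, and let |3;10,11,01⟩ be the EAP state whose Bell-pair labels (p_j, q_j) repeat the pattern (1,0),(1,1),(0,1) with period 3. Then for arbitrary real J^{xy}, J^{yz}, the Hamiltonian H₂ = Σ_{j=1}^{N} (J^{xy} σ_j^x σ_{j+1}^y + J^{yz} σ_j^y σ_{j+1}^z) satisfies H₂ |3;10,11,01⟩ = 0. -/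
open Matrix Finset
open scoped Kronecker

noncomputable section

/-- EAP state whose Bell-pair labels are given by patterns `pl, ql : ℕ → Fin 2`
(indexed by the representative `j ∈ {0,…,M-1}` of each antipodal pair). -/
def eapPat (N M : ℕ) [NeZero N] (pl ql : ℕ → Fin 2) : Cfg N → ℂ :=
  fun c => ∏ j ∈ Finset.range M,
    bell (pl j) (ql j) (c (j : ZMod N), c ((j : ZMod N) + (M : ZMod N)))

-- auxiliary lemmas
lemma bell_transport (μ : Fin 3) (p q a d : Fin 2) :
    ∑ b : Fin 2, pauli μ a b * bell p q (b, d) =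
      omegaSign p q μ * ∑ b : Fin 2, pauli μ d b * bell p q (a, b) := by
  fin_cases μ <;> fin_cases p <;> fin_cases q <;> fin_cases a <;> fin_cases d <;>
    simp [pauli, σx, σy, σz, bell, omegaSign, Fin.sum_univ_two, Prod.ext_iff] <;>
    ring

lemma omega_sq_s10 (p q : Fin 2) (μ : Fin 3) : omegaSign p q μ * omegaSign p q μ = 1 := by
  fin_cases p <;> fin_cases q <;> fin_cases μ <;> simp [omegaSign] <;> norm_num

lemma mulVec_pauliAt (N : ℕ) [NeZero N] (j : ZMod N) (A : Matrix (Fin 2) (Fin 2) ℂ)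
    (f : Cfg N → ℂ) (c : Cfg N) :
    (pauliAt N j A).mulVec f c = ∑ b : Fin 2, A (c j) b * f (Function.update c j b) := by
  classical
  have : (pauliAt N j A).mulVec f c
      = ∑ c' ∈ Finset.univ.filter (fun c' : Cfg N => ∀ i, i ≠ j → c i = c' i),
          A (c j) (c' j) * f c' := by
    rw [Matrix.mulVec, dotProduct, Finset.sum_filter]
    refine Finset.sum_congr rfl fun c' _ => ?_
    by_cases h : ∀ i, i ≠ j → c i = c' i <;> simp [pauliAt, h]
  rw [this]
  refine Finset.sum_bij' (fun c' _ => c' j) (fun b _ => Function.update c j b) ?_ ?_ ?_ ?_ ?_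
  · intros; exact Finset.mem_univ _
  · intro b _
    simp only [Finset.mem_filter, Finset.mem_univ, true_and]
    intro i hi
    rw [Function.update_of_ne hi]
  · intro c' hc'
    simp only [Finset.mem_filter, Finset.mem_univ, true_and] at hc'
    funext i
    by_cases hi : i = j
    · subst hi; simp
    · simp only [Function.update_of_ne hi]; exact hc' i hi
  · intro b _; simp
  · intro c' hc'
    simp only [Finset.mem_filter, Finset.mem_univ, true_and] at hc'
    congr 1
    congr 1
    funext i
    by_cases hi : i = j
    · subst hi; simp
    · rw [Function.update_of_ne hi]; exact (hc' i hi).symm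

lemma pauliAt_mulVec_comm (N : ℕ) [NeZero N] {j k : ZMod N} (h : j ≠ k)
    (A B : Matrix (Fin 2) (Fin 2) ℂ) (f : Cfg N → ℂ) :
    (pauliAt N j A).mulVec ((pauliAt N k B).mulVec f)
      = (pauliAt N k B).mulVec ((pauliAt N j A).mulVec f) := by
  funext c
  simp only [mulVec_pauliAt, Function.update_of_ne h, Function.update_of_ne h.symm,
    Finset.mul_sum]
  rw [Finset.sum_comm]
  refine Finset.sum_congr rfl fun b' _ => Finset.sum_congr rfl fun b _ => ?_
  rw [Function.update_comm h]
  ring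

section Transport
variable {N M : ℕ} [NeZero N] (hN : N = 2 * M)

lemma cast_ne_cast {a b : ℕ} (ha : a < N) (hb : b < N) (hab : a ≠ b) :
    (a : ZMod N) ≠ (b : ZMod N) := by
  intro h
  apply hab
  have := congrArg ZMod.val h
  rwa [ZMod.val_natCast_of_lt ha, ZMod.val_natCast_of_lt hb] at this

include hN in
lemma eap_update_fst (pl ql : ℕ → Fin 2) {k : ℕ} (hk : k < M) (b : Fin 2) (c : Cfg N) :
    eapPat N M pl ql (Function.update c (k : ZMod N) b)
      = bell (pl k) (ql k) (b, c ((k : ZMod N) + (M : ZMod N))) *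
        ∏ j ∈ (Finset.range M).erase k,
          bell (pl j) (ql j) (c (j : ZMod N), c ((j : ZMod N) + (M : ZMod N))) := by
  have hM0 : M ≠ 0 := by rintro rfl; exact (NeZero.ne N) (by omega)
  unfold eapPat
  rw [← Finset.mul_prod_erase _ _ (Finset.mem_range.mpr hk)]
  have e1 : Function.update c (k : ZMod N) b (k : ZMod N) = b := Function.update_self _ _ _
  have e2 : ((k : ZMod N) + (M : ZMod N)) ≠ (k : ZMod N) := by
    rw [← Nat.cast_add]
    exact cast_ne_cast (by omega) (by omega) (by omega)
  congr 1
  · rw [e1, Function.update_of_ne e2]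
  · refine Finset.prod_congr rfl fun j hj => ?_
    have hj' : j < M := Finset.mem_range.mp (Finset.mem_of_mem_erase hj)
    have hjk : j ≠ k := Finset.ne_of_mem_erase hj
    have d1 : (j : ZMod N) ≠ (k : ZMod N) := cast_ne_cast (by omega) (by omega) hjk
    have d2 : ((j : ZMod N) + (M : ZMod N)) ≠ (k : ZMod N) := by
      rw [← Nat.cast_add]
      exact cast_ne_cast (by omega) (by omega) (by omega)
    rw [Function.update_of_ne d1, Function.update_of_ne d2]

include hN in
lemma eap_update_snd (pl ql : ℕ → Fin 2) {k : ℕ} (hk : k < M) (b : Fin 2) (c : Cfg N) :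
    eapPat N M pl ql (Function.update c ((k : ZMod N) + (M : ZMod N)) b)
      = bell (pl k) (ql k) (c (k : ZMod N), b) *
        ∏ j ∈ (Finset.range M).erase k,
          bell (pl j) (ql j) (c (j : ZMod N), c ((j : ZMod N) + (M : ZMod N))) := by
  have hM0 : M ≠ 0 := by rintro rfl; exact (NeZero.ne N) (by omega)
  unfold eapPat
  rw [← Finset.mul_prod_erase _ _ (Finset.mem_range.mpr hk)]
  have e2 : (k : ZMod N) ≠ ((k : ZMod N) + (M : ZMod N)) := by
    rw [← Nat.cast_add]
    exact cast_ne_cast (by omega) (by omega) (by omega)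
  congr 1
  · rw [Function.update_self, Function.update_of_ne e2]
  · refine Finset.prod_congr rfl fun j hj => ?_
    have hj' : j < M := Finset.mem_range.mp (Finset.mem_of_mem_erase hj)
    have hjk : j ≠ k := Finset.ne_of_mem_erase hj
    have d1 : (j : ZMod N) ≠ ((k : ZMod N) + (M : ZMod N)) := by
      rw [← Nat.cast_add]
      exact cast_ne_cast (by omega) (by omega) (by omega)
    have d2 : ((j : ZMod N) + (M : ZMod N)) ≠ ((k : ZMod N) + (M : ZMod N)) := by
      rw [← Nat.cast_add, ← Nat.cast_add]
      exact cast_ne_cast (by omega) (by omega) (by omega)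
    rw [Function.update_of_ne d1, Function.update_of_ne d2]

include hN in
lemma eap_factor (pl ql : ℕ → Fin 2) {k : ℕ} (hk : k < M) (c : Cfg N) :
    eapPat N M pl ql c
      = bell (pl k) (ql k) (c (k : ZMod N), c ((k : ZMod N) + (M : ZMod N))) *
        ∏ j ∈ (Finset.range M).erase k,
          bell (pl j) (ql j) (c (j : ZMod N), c ((j : ZMod N) + (M : ZMod N))) := by
  unfold eapPat
  rw [← Finset.mul_prod_erase _ _ (Finset.mem_range.mpr hk)]

include hN in
lemma transport_fst (pl ql : ℕ → Fin 2) {k : ℕ} (hk : k < M) (μ : Fin 3) :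
    (pauliAt N (k : ZMod N) (pauli μ)).mulVec (eapPat N M pl ql)
      = omegaSign (pl k) (ql k) μ •
        (pauliAt N ((k : ZMod N) + (M : ZMod N)) (pauli μ)).mulVec (eapPat N M pl ql) := by
  funext c
  simp only [Pi.smul_apply, smul_eq_mul, mulVec_pauliAt]
  have hL : ∀ b, eapPat N M pl ql (Function.update c (k : ZMod N) b)
      = bell (pl k) (ql k) (b, c ((k : ZMod N) + (M : ZMod N))) *
        ∏ j ∈ (Finset.range M).erase k,
          bell (pl j) (ql j) (c (j : ZMod N), c ((j : ZMod N) + (M : ZMod N))) :=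
    fun b => eap_update_fst hN pl ql hk b c
  have hR : ∀ b, eapPat N M pl ql (Function.update c ((k : ZMod N) + (M : ZMod N)) b)
      = bell (pl k) (ql k) (c (k : ZMod N), b) *
        ∏ j ∈ (Finset.range M).erase k,
          bell (pl j) (ql j) (c (j : ZMod N), c ((j : ZMod N) + (M : ZMod N))) :=
    fun b => eap_update_snd hN pl ql hk b c
  simp only [hL, hR, ← mul_assoc]
  rw [← Finset.sum_mul, ← Finset.sum_mul, bell_transport]
  ring

include hN in
lemma transport_snd (pl ql : ℕ → Fin 2) {k : ℕ} (hk : k < M) (μ : Fin 3) :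
    (pauliAt N ((k : ZMod N) + (M : ZMod N)) (pauli μ)).mulVec (eapPat N M pl ql)
      = omegaSign (pl k) (ql k) μ •
        (pauliAt N (k : ZMod N) (pauli μ)).mulVec (eapPat N M pl ql) := by
  rw [transport_fst hN pl ql hk μ, smul_smul, omega_sq_s10, one_smul]

end Transport

/-- Model 2: when `N/2` is a multiple of 3, the EAP state `|3;10,11,01⟩` (Bell labels
repeating `(1,0),(1,1),(0,1)` with period 3) is a zero-energy eigenstate of
`H₂ = Σ_j (J^{xy} σ_j^x σ_{j+1}^y + J^{yz} σ_j^y σ_{j+1}^z)`. -/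
theorem model2_eap_eigenstate (N M : ℕ) [NeZero N] (hN : N = 2 * M) (hM : 3 ∣ M)
    (Jxy Jyz : ℝ) :
    (∑ j : ZMod N,
        ((Jxy : ℂ) • (pauliAt N j σx * pauliAt N (j + 1) σy) +
          (Jyz : ℂ) • (pauliAt N j σy * pauliAt N (j + 1) σz))).mulVec
      (eapPat N M (fun j => if j % 3 = 2 then 0 else 1)
        (fun j => if j % 3 = 0 then 0 else 1)) = 0 := by
  classical
  have hM0 : M ≠ 0 := by rintro rfl; exact (NeZero.ne N) (by omega)
  have hM3 : 3 ≤ M := by rcases hM with ⟨t, ht⟩; omega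
  set pl : ℕ → Fin 2 := fun j => if j % 3 = 2 then 0 else 1 with hpl
  set ql : ℕ → Fin 2 := fun j => if j % 3 = 0 then 0 else 1 with hql
  set ψ : Cfg N → ℂ := eapPat N M pl ql with hψ
  have hpl3 : ∀ a b : ℕ, a % 3 = b % 3 → pl a = pl b := by
    intro a b h; simp only [hpl]; rw [h]
  have hql3 : ∀ a b : ℕ, a % 3 = b % 3 → ql a = ql b := by
    intro a b h; simp only [hql]; rw [h]
  -- unified single site transport
  have T : ∀ (s : ZMod N) (μ : Fin 3),
      (pauliAt N s (pauli μ)).mulVec ψ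
        = omegaSign (pl s.val) (ql s.val) μ •
            (pauliAt N (s + (M : ZMod N)) (pauli μ)).mulVec ψ := by
    intro s μ
    have hsv : s.val < N := ZMod.val_lt s
    by_cases h : s.val < M
    · have h1 : ((s.val : ℕ) : ZMod N) = s := ZMod.natCast_zmod_val s
      conv_lhs => rw [← h1]
      rw [transport_fst hN pl ql h μ, h1]
    · push_neg at h
      have hkM : s.val - M < M := by omega
      have h2 : ((s.val - M : ℕ) : ZMod N) + ((M : ℕ) : ZMod N) = s := by
        rw [← Nat.cast_add, show s.val - M + M = s.val by omega]
        exact ZMod.natCast_zmod_val s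
      have h3 : s + (M : ZMod N) = ((s.val - M : ℕ) : ZMod N) := by
        conv_lhs => rw [← ZMod.natCast_zmod_val s]
        rw [← Nat.cast_add, show s.val + M = (s.val - M) + N by omega, Nat.cast_add,
          ZMod.natCast_self, add_zero]
      have htr := transport_snd hN pl ql hkM μ
      rw [h2] at htr
      rw [htr, hpl3 (s.val - M) s.val (by omega), hql3 (s.val - M) s.val (by omega), ← h3]
  -- pair cancellation
  have hone : (1 : ZMod N) ≠ 0 := by
    rw [show (1 : ZMod N) = ((1 : ℕ) : ZMod N) by norm_cast, Ne,
      ZMod.natCast_eq_zero_iff]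
    intro hdvd; have := Nat.le_of_dvd (by omega) hdvd; omega
  have key : ∀ (s : ZMod N) (μ ν : Fin 3),
      omegaSign (pl s.val) (ql s.val) μ *
          omegaSign (pl (s + 1).val) (ql (s + 1).val) ν = -1 →
      (pauliAt N s (pauli μ) * pauliAt N (s + 1) (pauli ν)).mulVec ψ
        = - (pauliAt N (s + (M : ZMod N)) (pauli μ) *
             pauliAt N (s + (M : ZMod N) + 1) (pauli ν)).mulVec ψ := by
    intro s μ ν hω
    have hMN : ((M : ℕ) : ZMod N) + 1 ≠ 0 := by
      rw [show ((M : ℕ) : ZMod N) + 1 = ((M + 1 : ℕ) : ZMod N) by push_cast; ring, Ne,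
        ZMod.natCast_eq_zero_iff]
      intro hdvd; have := Nat.le_of_dvd (by omega) hdvd; omega
    have hne1 : s ≠ s + 1 + (M : ZMod N) := by
      intro h; apply hMN
      have h' : s + 0 = s + ((M : ZMod N) + 1) := by
        rw [add_zero]; nth_rewrite 1 [h]; ring
      exact (add_left_cancel h').symm
    have hne2 : s + 1 + (M : ZMod N) ≠ s + (M : ZMod N) := by
      intro h; apply hone
      have h1 : s + 1 = s := add_right_cancel h
      have h2 : s + 1 = s + 0 := by rw [add_zero]; exact h1
      exact add_left_cancel h2
    set ω₁ := omegaSign (pl s.val) (ql s.val) μ with hω₁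
    set ω₂ := omegaSign (pl (s + 1).val) (ql (s + 1).val) ν with hω₂
    rw [← Matrix.mulVec_mulVec, ← Matrix.mulVec_mulVec]
    calc (pauliAt N s (pauli μ)).mulVec ((pauliAt N (s + 1) (pauli ν)).mulVec ψ)
        = (pauliAt N s (pauli μ)).mulVec
            (ω₂ • (pauliAt N (s + 1 + (M : ZMod N)) (pauli ν)).mulVec ψ) := by
          rw [T (s + 1) ν]
      _ = ω₂ • (pauliAt N s (pauli μ)).mulVec
            ((pauliAt N (s + 1 + (M : ZMod N)) (pauli ν)).mulVec ψ) := by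
          rw [Matrix.mulVec_smul]
      _ = ω₂ • (pauliAt N (s + 1 + (M : ZMod N)) (pauli ν)).mulVec
            ((pauliAt N s (pauli μ)).mulVec ψ) := by
          rw [pauliAt_mulVec_comm N hne1]
      _ = ω₂ • (pauliAt N (s + 1 + (M : ZMod N)) (pauli ν)).mulVec
            (ω₁ • (pauliAt N (s + (M : ZMod N)) (pauli μ)).mulVec ψ) := by
          rw [T s μ]
      _ = (ω₁ * ω₂) • (pauliAt N (s + 1 + (M : ZMod N)) (pauli ν)).mulVec
            ((pauliAt N (s + (M : ZMod N)) (pauli μ)).mulVec ψ) := by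
          rw [Matrix.mulVec_smul, smul_smul, mul_comm]
      _ = (ω₁ * ω₂) • (pauliAt N (s + (M : ZMod N)) (pauli μ)).mulVec
            ((pauliAt N (s + 1 + (M : ZMod N)) (pauli ν)).mulVec ψ) := by
          rw [pauliAt_mulVec_comm N hne2]
      _ = - (pauliAt N (s + (M : ZMod N)) (pauli μ)).mulVec
            ((pauliAt N (s + (M : ZMod N) + 1) (pauli ν)).mulVec ψ) := by
          rw [show s + 1 + (M : ZMod N) = s + (M : ZMod N) + 1 from add_right_comm s 1 _,
            hω, neg_one_smul]
  -- eta signs at the nat level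
  have eta_xy : ∀ r : ℕ,
      omegaSign (pl r) (ql r) 0 * omegaSign (pl (r + 1)) (ql (r + 1)) 1 = -1 := by
    intro r
    have h3 : r % 3 = 0 ∨ r % 3 = 1 ∨ r % 3 = 2 := by omega
    rcases h3 with h|h|h <;>
      · have h1 : (r + 1) % 3 = (r % 3 + 1) % 3 := by omega
        simp [hpl, hql, h, h1, omegaSign] <;> norm_num
  have eta_yz : ∀ r : ℕ,
      omegaSign (pl r) (ql r) 1 * omegaSign (pl (r + 1)) (ql (r + 1)) 2 = -1 := by
    intro r
    have h3 : r % 3 = 0 ∨ r % 3 = 1 ∨ r % 3 = 2 := by omega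
    rcases h3 with h|h|h <;>
      · have h1 : (r + 1) % 3 = (r % 3 + 1) % 3 := by omega
        simp [hpl, hql, h, h1, omegaSign] <;> norm_num
  -- value of (s+1).val mod 3
  have hval1 : ∀ s : ZMod N, (s + 1).val % 3 = (s.val + 1) % 3 := by
    intro s
    haveI : Fact (1 < N) := ⟨by omega⟩
    rw [ZMod.val_add, ZMod.val_one]
    rcases Nat.lt_or_ge (s.val + 1) N with h|h
    · rw [Nat.mod_eq_of_lt h]
    · have hsv : s.val < N := ZMod.val_lt s
      have hsv' : s.val + 1 = N := by omega
      rw [hsv', Nat.mod_self]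
      omega
  have hη1 : ∀ s : ZMod N, omegaSign (pl s.val) (ql s.val) 0 *
      omegaSign (pl (s + 1).val) (ql (s + 1).val) 1 = -1 := by
    intro s
    rw [hpl3 (s + 1).val (s.val + 1) (hval1 s), hql3 (s + 1).val (s.val + 1) (hval1 s)]
    exact eta_xy s.val
  have hη2 : ∀ s : ZMod N, omegaSign (pl s.val) (ql s.val) 1 *
      omegaSign (pl (s + 1).val) (ql (s + 1).val) 2 = -1 := by
    intro s
    rw [hpl3 (s + 1).val (s.val + 1) (hval1 s), hql3 (s + 1).val (s.val + 1) (hval1 s)]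
    exact eta_yz s.val
  -- the two-site terms as vectors
  set v : ZMod N → Cfg N → ℂ :=
    fun j => (pauliAt N j σx * pauliAt N (j + 1) σy).mulVec ψ with hv
  set w : ZMod N → Cfg N → ℂ :=
    fun j => (pauliAt N j σy * pauliAt N (j + 1) σz).mulVec ψ with hw
  have hMM : ∀ j : ZMod N, j + (M : ZMod N) + (M : ZMod N) = j := by
    intro j
    rw [add_assoc, ← Nat.cast_add, show M + M = N by omega, ZMod.natCast_self, add_zero]
  have hvflip : ∀ j : ZMod N, v (j + (M : ZMod N)) = - v j := by
    intro j
    have := key (j + (M : ZMod N)) 0 1 (hη1 _)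
    rw [hMM j] at this
    simpa [hv, pauli] using this
  have hwflip : ∀ j : ZMod N, w (j + (M : ZMod N)) = - w j := by
    intro j
    have := key (j + (M : ZMod N)) 1 2 (hη2 _)
    rw [hMM j] at this
    simpa [hw, pauli] using this
  -- linearity of mulVec over the sum
  have hsum : (∑ j : ZMod N,
        ((Jxy : ℂ) • (pauliAt N j σx * pauliAt N (j + 1) σy) +
          (Jyz : ℂ) • (pauliAt N j σy * pauliAt N (j + 1) σz))).mulVec ψ
      = ∑ j : ZMod N, ((Jxy : ℂ) • v j + (Jyz : ℂ) • w j) := by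
    have hlin := map_sum (AddMonoidHom.mk' (fun (A : Matrix (Cfg N) (Cfg N) ℂ) => A.mulVec ψ)
      (fun A B => Matrix.add_mulVec A B ψ))
      (fun j : ZMod N => (Jxy : ℂ) • (pauliAt N j σx * pauliAt N (j + 1) σy) +
        (Jyz : ℂ) • (pauliAt N j σy * pauliAt N (j + 1) σz)) Finset.univ
    simp only [AddMonoidHom.mk'_apply] at hlin
    rw [hlin]
    refine Finset.sum_congr rfl fun j _ => ?_
    simp only [Matrix.add_mulVec, Matrix.smul_mulVec, hv, hw]
  rw [hsum]
  -- pairing j ↔ j + M kills the sum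
  set F : ZMod N → Cfg N → ℂ := fun j => (Jxy : ℂ) • v j + (Jyz : ℂ) • w j with hF
  have hFflip : ∀ j : ZMod N, F (j + (M : ZMod N)) = - F j := by
    intro j
    simp only [hF, hvflip j, hwflip j, smul_neg, neg_add]
  have hshift : ∑ j : ZMod N, F j = ∑ j : ZMod N, F (j + (M : ZMod N)) :=
    (Fintype.sum_equiv (Equiv.addRight ((M : ℕ) : ZMod N))
      (fun j => F (j + (M : ZMod N))) F (fun j => rfl)).symm
  have hS : ∑ j : ZMod N, F j = - ∑ j : ZMod N, F j := by
    conv_lhs => rw [hshift]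
    rw [← Finset.sum_neg_distrib]
    exact Finset.sum_congr rfl fun j _ => hFflip j
  have h2 : (2 : ℂ) • (∑ j : ZMod N, F j) = 0 := by
    rw [two_smul]
    nth_rewrite 1 [hS]
    rw [neg_add_cancel]
  have := smul_eq_zero.mp h2
  rcases this with h|h
  · norm_num at h
  · exact h
end
end

section
/- Let N be even with N/2 even, and consider the EAP states |2;11,10⟩ and |2;10,11⟩ with period-2 Bell-pair label patterns (1,1),(1,0) and (1,0),(1,1), respectively. Then the one-site translation operator T on the N-qubit chain satisfies T|2;11,10⟩ = |2;10,11⟩ and T|2;10,11⟩ = -|2;11,10⟩; consequently, the superpositions (|2;11,10⟩ ± i|2;10,11⟩)/√2 are eigenvectors of T with eigenvalues ∓i (momentum ±π/2). -/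
open Matrix Finset
open scoped Kronecker

noncomputable section

/-- The one-site translation operator on the chain, mapping `|σ⟩` to the basis state with
each site's content shifted by one. -/
def transOp (N : ℕ) [NeZero N] : Matrix (Cfg N) (Cfg N) ℂ :=
  Matrix.of fun c c' => if ∀ j, c' j = c (j + 1) then 1 else 0


lemma transOp_mulVec (N : ℕ) [NeZero N] (v : Cfg N → ℂ) (c : Cfg N) :
    (transOp N).mulVec v c = v (fun j => c (j + 1)) := by
  unfold transOp Matrix.mulVec dotProduct
  simp only [Matrix.of_apply]
  rw [Finset.sum_eq_single (fun j => c (j + 1))]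
  · rw [if_pos (fun j => rfl), one_mul]
  · intro b _ hb
    rw [if_neg, zero_mul]
    exact fun h => hb (funext h)
  · exact fun h => absurd (Finset.mem_univ _) h

lemma bell_swap (q : Fin 2) (a b : Fin 2) :
    bell 1 q (b, a) = (-1 : ℂ) ^ (q : ℕ) * bell 1 q (a, b) := by
  fin_cases q <;> fin_cases a <;> fin_cases b <;>
    simp [bell, Prod.ext_iff] <;> ring

lemma shift_eap (N M : ℕ) [NeZero N] (hN : N = 2 * M) (hM : 0 < M)
    (ql ql' : ℕ → Fin 2) (hq : ∀ j, ql' (j + 1) = ql j) (h0 : ql' 0 = ql (M - 1))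
    (c : Cfg N) :
    eapPat N M (fun _ => 1) ql (fun j => c (j + 1)) =
      (-1 : ℂ) ^ ((ql (M - 1) : ℕ)) * eapPat N M (fun _ => 1) ql' c := by
  obtain ⟨m, rfl⟩ : ∃ m, M = m + 1 := ⟨M - 1, by omega⟩
  simp only [Nat.add_sub_cancel] at h0 ⊢
  unfold eapPat
  rw [Finset.prod_range_succ, Finset.prod_range_succ']
  set A : ZMod N := ((m + 1 : ℕ) : ZMod N) with hA
  have hAA : A + A = 0 := by
    rw [hA, ← Nat.cast_add, show m + 1 + (m + 1) = N by omega, ZMod.natCast_self]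
  have e1 : (m : ZMod N) + 1 = A := by rw [hA]; push_cast; ring
  have e2 : (m : ZMod N) + A + 1 = 0 := by rw [add_right_comm, e1, hAA]
  have hprod : ∀ x ∈ Finset.range m,
      bell 1 (ql x) (c ((x : ZMod N) + 1), c ((x : ZMod N) + A + 1)) =
      bell 1 (ql' (x + 1)) (c ((x + 1 : ℕ) : ZMod N), c (((x + 1 : ℕ) : ZMod N) + A)) := by
    intro x _
    rw [hq, show ((x + 1 : ℕ) : ZMod N) = (x : ZMod N) + 1 by push_cast; ring,
      show (x : ZMod N) + 1 + A = (x : ZMod N) + A + 1 by ring]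
  beta_reduce
  rw [Finset.prod_congr rfl hprod, e1, e2,
    show ((0 : ℕ) : ZMod N) = 0 by push_cast; ring, zero_add, bell_swap, h0]
  ring

/-- The EAP states `|2;11,10⟩` and `|2;10,11⟩` satisfy `T|2;11,10⟩ = |2;10,11⟩` and
`T|2;10,11⟩ = -|2;11,10⟩`; consequently `(|2;11,10⟩ ± i|2;10,11⟩)/√2` are eigenvectors
of the translation `T` with eigenvalues `∓i` (momentum `±π/2`). -/
theorem eap_translation_momentum (N M : ℕ) [NeZero N] (hN : N = 2 * M) (hM : 2 ∣ M) :
    (transOp N).mulVec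
        (eapPat N M (fun _ => 1) (fun j => if j % 2 = 0 then 1 else 0)) =
      eapPat N M (fun _ => 1) (fun j => if j % 2 = 0 then 0 else 1) ∧
    (transOp N).mulVec
        (eapPat N M (fun _ => 1) (fun j => if j % 2 = 0 then 0 else 1)) =
      -eapPat N M (fun _ => 1) (fun j => if j % 2 = 0 then 1 else 0) ∧
    (transOp N).mulVec
        (((Real.sqrt 2 : ℂ))⁻¹ •
          (eapPat N M (fun _ => 1) (fun j => if j % 2 = 0 then 1 else 0) +
            Complex.I • eapPat N M (fun _ => 1) (fun j => if j % 2 = 0 then 0 else 1))) =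
      (-Complex.I) •
        (((Real.sqrt 2 : ℂ))⁻¹ •
          (eapPat N M (fun _ => 1) (fun j => if j % 2 = 0 then 1 else 0) +
            Complex.I • eapPat N M (fun _ => 1) (fun j => if j % 2 = 0 then 0 else 1))) ∧
    (transOp N).mulVec
        (((Real.sqrt 2 : ℂ))⁻¹ •
          (eapPat N M (fun _ => 1) (fun j => if j % 2 = 0 then 1 else 0) -
            Complex.I • eapPat N M (fun _ => 1) (fun j => if j % 2 = 0 then 0 else 1))) =
      Complex.I •
        (((Real.sqrt 2 : ℂ))⁻¹ •
          (eapPat N M (fun _ => 1) (fun j => if j % 2 = 0 then 1 else 0) -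
            Complex.I • eapPat N M (fun _ => 1) (fun j => if j % 2 = 0 then 0 else 1))) := by
  have hM0 : 0 < M := by
    have := NeZero.ne N; omega
  obtain ⟨k, hk⟩ := hM
  have hM1 : (M - 1) % 2 = 1 := by omega
  have h1 : (transOp N).mulVec
      (eapPat N M (fun _ => 1) (fun j => if j % 2 = 0 then 1 else 0)) =
      eapPat N M (fun _ => 1) (fun j => if j % 2 = 0 then 0 else 1) := by
    funext c
    rw [transOp_mulVec,
      shift_eap N M hN hM0 (fun j => if j % 2 = 0 then 1 else 0)
        (fun j => if j % 2 = 0 then 0 else 1)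
        (fun j => by rcases Nat.mod_two_eq_zero_or_one j with h | h <;>
          simp [Nat.add_mod, h])
        (by simp [hM1])]
    simp [hM1]
  have h2 : (transOp N).mulVec
      (eapPat N M (fun _ => 1) (fun j => if j % 2 = 0 then 0 else 1)) =
      -eapPat N M (fun _ => 1) (fun j => if j % 2 = 0 then 1 else 0) := by
    funext c
    rw [transOp_mulVec,
      shift_eap N M hN hM0 (fun j => if j % 2 = 0 then 0 else 1)
        (fun j => if j % 2 = 0 then 1 else 0)
        (fun j => by rcases Nat.mod_two_eq_zero_or_one j with h | h <;>
          simp [Nat.add_mod, h])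
        (by simp [hM1])]
    simp [hM1]
  refine ⟨h1, h2, ?_, ?_⟩
  · rw [Matrix.mulVec_smul, Matrix.mulVec_add, Matrix.mulVec_smul, h1, h2]
    funext x
    simp only [Pi.smul_apply, Pi.add_apply, Pi.neg_apply, smul_eq_mul]
    ring_nf
    simp only [Complex.I_sq]
    ring
  · rw [Matrix.mulVec_smul, Matrix.mulVec_sub, Matrix.mulVec_smul, h1, h2]
    funext x
    simp only [Pi.smul_apply, Pi.sub_apply, Pi.neg_apply, smul_eq_mul]
    ring_nf
    simp only [Complex.I_sq]
    ring
end
end
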